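/- arXiv:math/9912067 — 3 statements merged into one kernel-verified Lean document; each statement's English description precedes it below -/
import Mathlib

section
/- For all nonnegative integers a, b ≤ r with a + b > r, the set D⁰_{ω_a,ω_b} is empty. -/
open SemidirectProduct

abbrev NB (r : ℕ) := Fin r → Multiplicative (ZMod 2)

def permAct (r : ℕ) : Equiv.Perm (Fin r) →* MulAut (NB r) where
  toFun σ :=
    { toFun := fun c => c ∘ σ.symm
      invFun := fun c => c ∘ σ
      left_inv := fun c => by ext i; simp
      right_inv := fun c => by ext i; simp
      map_mul' := fun c d => rfl }
  map_one' := rfl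
  map_mul' := fun σ τ => rfl

abbrev WB (r : ℕ) := NB r ⋊[permAct r] Equiv.Perm (Fin r)

/-- The vector `e_i` with single nonzero entry at position `i`. -/
def eVec (r : ℕ) (i : Fin r) : NB r := fun j => if j = i then Multiplicative.ofAdd 1 else 1

/-- `tB r i` is the element `t_{i+1} = (e_{i+1}, 1)` of the paper (0-indexed `i`). -/
def tB (r : ℕ) (i : ℕ) : WB r := if h : i < r then ⟨eVec r ⟨i, h⟩, 1⟩ else 1

/-- `sB r i` is the simple reflection `s_i = (0, (i, i+1))` of the paper (1-indexed,
`1 ≤ i ≤ r - 1`); in 0-indexed terms it swaps positions `i-1` and `i`. -/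
def sB (r : ℕ) (i : ℕ) : WB r :=
  if h : 0 < i ∧ i < r then ⟨1, Equiv.swap ⟨i - 1, by omega⟩ ⟨i, h.2⟩⟩ else 1

/-- The Coxeter generating set `S = {s₀, s₁, …, s_{r-1}}` where `s₀ = t₁`. -/
def genS (r : ℕ) : Set (WB r) :=
  {tB r 0} ∪ {w | ∃ i, 1 ≤ i ∧ i < r ∧ w = sB r i}

/-- Length with respect to `S`: the least `n` such that `w` is a product of `n`
elements of `S`. -/
noncomputable def len (r : ℕ) (w : WB r) : ℕ :=
  sInf {n | ∃ l : List (WB r), (∀ x ∈ l, x ∈ genS r) ∧ l.length = n ∧ l.prod = w}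

/-- `C_{ω_a} = ⟨t₁, …, t_a⟩`. -/
def Comega (r a : ℕ) : Subgroup (WB r) :=
  Subgroup.closure {w | ∃ i, i < a ∧ w = tB r i}

/-- Distinguished right `C_{ω_a}`-coset representatives. -/
def Dright (r a : ℕ) : Set (WB r) :=
  {d | ∀ w ∈ Comega r a, len r d ≤ len r (w * d)}

/-- Distinguished double `C_{ω_a}`-`C_{ω_b}` coset representatives. -/
def Dab (r a b : ℕ) : Set (WB r) :=
  {d | d ∈ Dright r a ∧ d⁻¹ ∈ Dright r b}

/-- Distinguished double coset representatives with the trivial intersection property. -/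
def D0 (r a b : ℕ) : Set (WB r) :=
  {d | d ∈ Dab r a b ∧ ∀ x ∈ Comega r a, d⁻¹ * x * d ∈ Comega r b → x = 1}

/-- `n₀ w` : the number of nonzero coordinates of the `(ZMod 2)^r`-component of `w`. -/
def n0 (r : ℕ) (w : WB r) : ℕ :=
  (Finset.univ.filter fun i => w.left i ≠ 1).card


lemma card_filter_lt' (r a : ℕ) (ha : a ≤ r) :
    (Finset.univ.filter fun i : Fin r => (i : ℕ) < a).card = a := by
  have : (Finset.univ.filter fun i : Fin r => (i : ℕ) < a)
      = Finset.map (Fin.castLEEmb ha) Finset.univ := by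
    ext x
    simp [Fin.castLEEmb, Fin.exists_iff, Fin.ext_iff]
  simp [this]

lemma conj_tB (r : ℕ) (d : WB r) (i : Fin r) :
    d⁻¹ * tB r i * d = tB r (d.right.symm i) := by
  have hi : (i : ℕ) < r := i.isLt
  have hj : ((d.right.symm i : Fin r) : ℕ) < r := (d.right.symm i).isLt
  ext j : 2
  · simp only [tB, hi, hj, dif_pos, mul_left, inv_left, mul_right, inv_right]
    simp only [permAct, MonoidHom.coe_mk, OneHom.coe_mk, MulEquiv.coe_mk, Equiv.coe_fn_mk]
    simp only [Pi.mul_apply, Function.comp_apply, Pi.inv_apply]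
    have h : ((d.right j : Fin r) = ⟨i, hi⟩) ↔ (j = ⟨(d.right.symm i : Fin r), hj⟩) := by
      constructor
      · intro h; apply d.right.injective; simp [h, Fin.ext_iff]
      · intro h; subst h; simp [Fin.ext_iff]
    have h2 : eVec r ⟨i, hi⟩ (d.right j) = eVec r ⟨(d.right.symm i : Fin r), hj⟩ j := by
      simp only [eVec]; rw [if_congr h rfl rfl]
    simp only [mul_one, Equiv.Perm.inv_def, Equiv.symm_symm]
    change (d.left (d.right j))⁻¹ * eVec r ⟨i, hi⟩ (d.right j) * d.left (d.right j) = _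
    rw [h2, mul_comm, ← mul_assoc, mul_inv_cancel, one_mul]
  · simp [tB, hi, hj]

/-- For nonnegative integers `a, b ≤ r` with `a + b > r`,
the set `D⁰_{ω_a,ω_b}` is empty. -/
theorem stmt1 (r a b : ℕ) (hr : 2 ≤ r) (ha : a ≤ r) (hb : b ≤ r) (hab : r < a + b) :
    D0 r a b = ∅ := by
  rw [Set.eq_empty_iff_forall_notMem]
  intro d hd
  obtain ⟨-, htriv⟩ := hd
  -- pigeonhole: find i with i < a and (d.right.symm i) < b
  set A : Finset (Fin r) := Finset.univ.filter (fun i => (i : ℕ) < a) with hA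
  set B : Finset (Fin r) := Finset.univ.filter (fun i => (i : ℕ) < b) with hB
  have hAc : A.card = a := card_filter_lt' r a ha
  have hBc : B.card = b := card_filter_lt' r b hb
  have hA'c : (A.image d.right.symm).card = a := by
    rw [Finset.card_image_of_injective _ d.right.symm.injective, hAc]
  have hne : ((A.image d.right.symm) ∩ B).Nonempty := by
    by_contra hmt
    rw [Finset.not_nonempty_iff_eq_empty] at hmt
    have hdisj : Disjoint (A.image d.right.symm) B := Finset.disjoint_iff_inter_eq_empty.mpr hmt
    have := Finset.card_union_of_disjoint hdisj
    have hle : ((A.image d.right.symm) ∪ B).card ≤ r := by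
      simpa using Finset.card_le_card ((A.image d.right.symm) ∪ B).subset_univ
    omega
  obtain ⟨j, hj⟩ := hne
  rw [Finset.mem_inter, Finset.mem_image] at hj
  obtain ⟨⟨i, hiA, hij⟩, hjB⟩ := hj
  rw [hA, Finset.mem_filter] at hiA
  rw [hB, Finset.mem_filter] at hjB
  have hxa : tB r i ∈ Comega r a := Subgroup.subset_closure ⟨i, hiA.2, by simp⟩
  have hxb : d⁻¹ * tB r i * d ∈ Comega r b := by
    rw [show ((i : ℕ) : ℕ) = ((i : Fin r) : ℕ) from rfl, conj_tB r d i, hij]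
    exact Subgroup.subset_closure ⟨j, hjB.2, by simp⟩
  have h1 := htriv _ hxa hxb
  have : (tB r (i : ℕ)).left i = 1 := by rw [h1]; rfl
  rw [tB] at this
  simp only [i.isLt, dif_pos] at this
  simp [eVec] at this
end

section
/- For all nonnegative integers a, b ≤ r and all d ∈ W: (i) d ∈ D_{ω_a} if and only if n₀(x·d) = n₀(x) + n₀(d) for every x ∈ C_{ω_a}; and (ii) d ∈ D⁰_{ω_a,ω_b} if and only if n₀(x·d·y) = n₀(x) + n₀(d) + n₀(y) for every x ∈ C_{ω_a} and every y ∈ C_{ω_b}. -/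
open SemidirectProduct

namespace Stmt3Aux

open SemidirectProduct Finset

abbrev M2 := Multiplicative (ZMod 2)

lemma M2.cases (x : M2) : x = 1 ∨ x = Multiplicative.ofAdd 1 := by
  revert x; decide

lemma M2.mul_ne_one {x y : M2} (h : ¬ (x ≠ 1 ∧ y ≠ 1)) : x * y ≠ 1 ↔ (x ≠ 1 ∨ y ≠ 1) := by
  revert h; revert x y; decide

lemma M2.ofAdd_mul_ne_one (x : M2) : Multiplicative.ofAdd (1 : ZMod 2) * x ≠ 1 ↔ x = 1 := by
  revert x; decide

lemma M2.ofAdd_mul_eq_one {x : M2} (h : x ≠ 1) : Multiplicative.ofAdd (1 : ZMod 2) * x = 1 := by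
  revert h; revert x; decide

variable {r : ℕ}

/-- weight of a vector -/
def wt (c : NB r) : ℕ := (Finset.univ.filter fun i => c i ≠ 1).card

lemma n0_eq_wt (w : WB r) : n0 r w = wt w.left := rfl

lemma wt_add_of_disjoint {c c' : NB r} (h : ∀ i, c i ≠ 1 → c' i = 1) :
    wt (c * c') = wt c + wt c' := by
  classical
  unfold wt
  rw [← Finset.card_union_of_disjoint]
  · congr 1
    ext i
    simp only [Finset.mem_filter, Finset.mem_union, Finset.mem_univ, true_and, Pi.mul_apply]
    rw [M2.mul_ne_one]
    intro ⟨h1, h2⟩; exact h2 (h i h1)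
  · rw [Finset.disjoint_filter]
    intro i _ hi
    simp [h i hi]

lemma wt_eVec (i : Fin r) : wt (eVec r i) = 1 := by
  classical
  unfold wt
  convert Finset.card_singleton i
  ext j
  simp only [Finset.mem_filter, Finset.mem_univ, true_and, Finset.mem_singleton, eVec]
  by_cases hji : j = i <;> simp [hji]

lemma wt_toggle_one {c : NB r} {j : Fin r} (h : c j = 1) :
    wt (eVec r j * c) = wt c + 1 := by
  classical
  unfold wt
  have : (Finset.univ.filter fun i => (eVec r j * c) i ≠ 1)
      = insert j (Finset.univ.filter fun i => c i ≠ 1) := by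
    ext i
    simp only [Finset.mem_filter, Finset.mem_univ, true_and, Finset.mem_insert, Pi.mul_apply, eVec]
    by_cases hij : i = j
    · subst hij; simp [h]
    · simp [hij]
  rw [this, Finset.card_insert_of_notMem (by simp [h])]

lemma wt_toggle_ne {c : NB r} {j : Fin r} (h : c j ≠ 1) :
    wt (eVec r j * c) + 1 = wt c := by
  classical
  unfold wt
  have : (Finset.univ.filter fun i => c i ≠ 1)
      = insert j (Finset.univ.filter fun i => (eVec r j * c) i ≠ 1) := by
    ext i
    simp only [Finset.mem_filter, Finset.mem_univ, true_and, Finset.mem_insert, Pi.mul_apply, eVec]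
    by_cases hij : i = j
    · subst hij; simp [h]
    · simp [hij]
  rw [this, Finset.card_insert_of_notMem (by simp [eVec, M2.ofAdd_mul_eq_one h])]

open SemidirectProduct Finset Equiv

variable {r : ℕ}


def Ahat (w : WB r) (u v : Fin r) : ℕ :=
  if w.left v ≠ 1 then 1 + (if w.right⁻¹ u < w.right⁻¹ v then 1 else 0)
  else (if w.right⁻¹ v < w.right⁻¹ u then 1 else 0)

def pairSum (w : WB r) : ℕ :=
  ∑ p : Fin r × Fin r, if p.1 < p.2 then Ahat w p.1 p.2 else 0

def LB (w : WB r) : ℕ := wt w.left + pairSum w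

lemma LB_one : LB (1 : WB r) = 0 := by
  have h1 : wt ((1 : WB r).left) = 0 := by
    unfold wt; simp
  have h2 : pairSum (1 : WB r) = 0 := by
    unfold pairSum
    apply Finset.sum_eq_zero
    intro p _
    unfold Ahat
    simp only [one_left, one_right, Pi.one_apply, ne_eq, not_true_eq_false, if_false,
      inv_one, Equiv.Perm.one_apply]
    split_ifs with h1 h2
    all_goals first | exact absurd h2 (asymm h1) | rfl
  unfold LB; rw [h1, h2]

lemma permAct_apply (σ : Equiv.Perm (Fin r)) (c : NB r) (v : Fin r) :
    (permAct r σ) c v = c (σ.symm v) := rfl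

lemma t0_eq (hr : 0 < r) : tB r 0 = ⟨eVec r ⟨0, hr⟩, 1⟩ := dif_pos hr

lemma t0_mul_left (hr : 0 < r) (w : WB r) :
    (tB r 0 * w).left = eVec r ⟨0, hr⟩ * w.left := by
  rw [t0_eq hr, mul_left]
  show eVec r ⟨0, hr⟩ * (permAct r 1) w.left = _
  rw [map_one]
  rfl

lemma t0_mul_right (hr : 0 < r) (w : WB r) : (tB r 0 * w).right = w.right := by
  rw [t0_eq hr, mul_right]; exact one_mul _

lemma pairSum_t0 (hr : 0 < r) (w : WB r) : pairSum (tB r 0 * w) = pairSum w := by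
  unfold pairSum
  apply Finset.sum_congr rfl
  intro p _
  by_cases h : p.1 < p.2
  · rw [if_pos h, if_pos h]
    unfold Ahat
    rw [t0_mul_left hr, t0_mul_right hr]
    have hp2 : p.2 ≠ ⟨0, hr⟩ := by
      intro he
      have := h
      rw [he] at this
      exact absurd this (by simp [Fin.lt_def])
    have : (eVec r ⟨0, hr⟩ * w.left) p.2 = w.left p.2 := by
      show eVec r ⟨0, hr⟩ p.2 * w.left p.2 = _
      rw [eVec, if_neg hp2, one_mul]
    rw [this]
  · rw [if_neg h, if_neg h]

lemma LB_t0_asc (hr : 0 < r) {w : WB r} (h : w.left ⟨0, hr⟩ = 1) :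
    LB (tB r 0 * w) = LB w + 1 := by
  unfold LB
  rw [pairSum_t0 hr, t0_mul_left hr, wt_toggle_one h]
  omega

lemma LB_t0_desc (hr : 0 < r) {w : WB r} (h : w.left ⟨0, hr⟩ ≠ 1) :
    LB (tB r 0 * w) + 1 = LB w := by
  unfold LB
  rw [pairSum_t0 hr, t0_mul_left hr]
  have := wt_toggle_ne h
  omega

lemma wt_comp_perm (c : NB r) (τ : Equiv.Perm (Fin r)) :
    wt (fun v => c (τ v)) = wt c := by
  unfold wt
  apply Finset.card_equiv τ
  simp

lemma s_mul_left (τ : Equiv.Perm (Fin r)) (w : WB r) (v : Fin r) :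
    ((⟨1, τ⟩ : WB r) * w).left v = w.left (τ.symm v) := by
  rw [mul_left]
  show 1 * ((permAct r τ) w.left) v = _
  rw [one_mul]; rfl

lemma s_mul_rightinv (τ : Equiv.Perm (Fin r)) (w : WB r) (v : Fin r) :
    ((⟨1, τ⟩ : WB r) * w).right⁻¹ v = w.right⁻¹ (τ⁻¹ v) := by
  rw [mul_right]
  rw [mul_inv_rev]
  rfl

lemma Ahat_swap (k k' : Fin r) (w : WB r) (u v : Fin r) :
    Ahat ((⟨1, Equiv.swap k k'⟩ : WB r) * w) u v
      = Ahat w (Equiv.swap k k' u) (Equiv.swap k k' v) := by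
  unfold Ahat
  rw [s_mul_left, s_mul_rightinv, s_mul_rightinv]
  rw [Equiv.symm_swap, Equiv.swap_inv]

open SemidirectProduct Finset Equiv

variable {r : ℕ}

lemma swap_lt_iff {k k' : Fin r} (hkk' : (k : ℕ) + 1 = (k' : ℕ)) (u v : Fin r)
    (h1 : (u, v) ≠ (k, k')) (h2 : (u, v) ≠ (k', k)) :
    (Equiv.swap k k' u < Equiv.swap k k' v ↔ u < v) := by
  have hv : ∀ x : Fin r, ((Equiv.swap k k' x : Fin r) : ℕ)
      = if (x : ℕ) = (k : ℕ) then (k' : ℕ) else if (x : ℕ) = (k' : ℕ) then (k : ℕ) else (x : ℕ) := by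
    intro x
    rw [Equiv.swap_apply_def]
    split_ifs <;> simp_all [Fin.ext_iff]
  have h1' : ¬((u : ℕ) = (k : ℕ) ∧ (v : ℕ) = (k' : ℕ)) := by
    rintro ⟨p, q⟩
    exact h1 (Prod.ext (Fin.ext p) (Fin.ext q))
  have h2' : ¬((u : ℕ) = (k' : ℕ) ∧ (v : ℕ) = (k : ℕ)) := by
    rintro ⟨p, q⟩
    exact h2 (Prod.ext (Fin.ext p) (Fin.ext q))
  rw [Fin.lt_def, Fin.lt_def, hv u, hv v]
  split_ifs <;> omega

lemma pairSum_swap {k k' : Fin r} (hkk' : (k : ℕ) + 1 = (k' : ℕ)) (w : WB r) :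
    pairSum ((⟨1, Equiv.swap k k'⟩ : WB r) * w) + Ahat w k k'
      = pairSum w + Ahat w k' k := by
  classical
  have hne : k ≠ k' := by
    intro h; rw [h] at hkk'; omega
  have hne' : ((k, k') : Fin r × Fin r) ≠ (k', k) := by
    simp [Prod.ext_iff, hne]
  have hstep1 : pairSum ((⟨1, Equiv.swap k k'⟩ : WB r) * w)
      = ∑ p : Fin r × Fin r,
          if Equiv.swap k k' p.1 < Equiv.swap k k' p.2 then Ahat w p.1 p.2 else 0 := by
    unfold pairSum
    refine (Fintype.sum_equiv (Equiv.prodCongr (Equiv.swap k k') (Equiv.swap k k'))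
      (fun p => if Equiv.swap k k' p.1 < Equiv.swap k k' p.2 then Ahat w p.1 p.2 else 0)
      (fun p => if p.1 < p.2 then Ahat ((⟨1, Equiv.swap k k'⟩ : WB r) * w) p.1 p.2 else 0)
      ?_).symm
    intro p
    obtain ⟨u, v⟩ := p
    simp only [Equiv.prodCongr_apply, Prod.map]
    rw [Ahat_swap, Equiv.swap_apply_self, Equiv.swap_apply_self]
  have hP : ({(k, k'), (k', k)} : Finset (Fin r × Fin r)) ⊆ Finset.univ := by
    intro p _; exact Finset.mem_univ p
  have split1 : ∀ F : Fin r × Fin r → ℕ,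
      (∑ p : Fin r × Fin r, F p)
        = (∑ p ∈ Finset.univ \ {(k, k'), (k', k)}, F p) + (F (k, k') + F (k', k)) := by
    intro F
    rw [← Finset.sum_pair hne']
    exact (Finset.sum_sdiff hP).symm
  have hkk : k < k' := by rw [Fin.lt_def]; omega
  have e1 := split1
    (fun p => if Equiv.swap k k' p.1 < Equiv.swap k k' p.2 then Ahat w p.1 p.2 else 0)
  have e2 := split1 (fun p => if p.1 < p.2 then Ahat w p.1 p.2 else 0)
  have hmid : (∑ p ∈ Finset.univ \ {(k, k'), (k', k)},
        if Equiv.swap k k' p.1 < Equiv.swap k k' p.2 then Ahat w p.1 p.2 else 0)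
      = ∑ p ∈ Finset.univ \ {(k, k'), (k', k)},
        if p.1 < p.2 then Ahat w p.1 p.2 else 0 := by
    apply Finset.sum_congr rfl
    intro p hp
    simp only [Finset.mem_sdiff, Finset.mem_insert, Finset.mem_singleton, not_or] at hp
    obtain ⟨-, hp1, hp2⟩ := hp
    have := swap_lt_iff hkk' p.1 p.2 (by simpa using hp1) (by simpa using hp2)
    rw [if_congr this rfl rfl]
  have ht1 : Equiv.swap k k' k = k' := Equiv.swap_apply_left k k'
  have ht2 : Equiv.swap k k' k' = k := Equiv.swap_apply_right k k'
  dsimp only at e1 e2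
  rw [ht1, ht2, if_neg (asymm hkk), if_pos hkk] at e1
  rw [if_pos hkk, if_neg (asymm hkk)] at e2
  rw [hstep1, e1, hmid]
  unfold pairSum
  rw [e2]
  omega

lemma Ahat_dichot (w : WB r) {k k' : Fin r} (hne : k ≠ k') :
    Ahat w k k' = Ahat w k' k + 1 ∨ Ahat w k k' + 1 = Ahat w k' k := by
  have hq : w.right⁻¹ k ≠ w.right⁻¹ k' := fun h => hne (w.right⁻¹.injective h)
  unfold Ahat
  rcases lt_or_gt_of_ne hq with h | h
  · have h2 : ¬ w.right⁻¹ k' < w.right⁻¹ k := asymm h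
    by_cases g1 : w.left k' ≠ 1 <;> by_cases g2 : w.left k ≠ 1 <;>
      (rw [Equiv.Perm.inv_def] at h h2; simp [g1, g2, h, h2])
  · have h2 : ¬ w.right⁻¹ k < w.right⁻¹ k' := asymm h
    by_cases g1 : w.left k' ≠ 1 <;> by_cases g2 : w.left k ≠ 1 <;>
      (rw [Equiv.Perm.inv_def] at h h2; simp [g1, g2, h, h2])

lemma wt_s_mul (k k' : Fin r) (w : WB r) :
    wt (((⟨1, Equiv.swap k k'⟩ : WB r) * w).left) = wt w.left := by
  have : (((⟨1, Equiv.swap k k'⟩ : WB r) * w).left)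
      = fun v => w.left (Equiv.swap k k' v) := by
    funext v; rw [s_mul_left, Equiv.symm_swap]
  rw [this, wt_comp_perm]

lemma LB_swap_step {k k' : Fin r} (hkk' : (k : ℕ) + 1 = (k' : ℕ)) (w : WB r) :
    LB ((⟨1, Equiv.swap k k'⟩ : WB r) * w) = LB w + 1
      ∨ LB ((⟨1, Equiv.swap k k'⟩ : WB r) * w) + 1 = LB w := by
  have hne : k ≠ k' := by intro h; rw [h] at hkk'; omega
  have hps := pairSum_swap hkk' w
  have hwt := wt_s_mul k k' w
  have hd := Ahat_dichot w hne
  unfold LB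
  rw [hwt]
  omega

lemma LB_swap_desc {k k' : Fin r} (hkk' : (k : ℕ) + 1 = (k' : ℕ)) (w : WB r)
    (hdesc : Ahat w k' k + 1 = Ahat w k k') :
    LB ((⟨1, Equiv.swap k k'⟩ : WB r) * w) + 1 = LB w := by
  have hps := pairSum_swap hkk' w
  have hwt := wt_s_mul k k' w
  unfold LB
  rw [hwt]
  omega

lemma no_descent_char {k k' : Fin r} (hne : k ≠ k') {w : WB r}
    (hno : Ahat w k k' ≤ Ahat w k' k) (hk : w.left k = 1) :
    w.left k' = 1 ∧ w.right⁻¹ k < w.right⁻¹ k' := by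
  have hq : w.right⁻¹ k ≠ w.right⁻¹ k' := fun h => hne (w.right⁻¹.injective h)
  have hAk'k : Ahat w k' k = if w.right⁻¹ k < w.right⁻¹ k' then 1 else 0 := by
    unfold Ahat
    rw [if_neg (by simpa using hk)]
  rw [hAk'k] at hno
  unfold Ahat at hno
  rcases lt_or_gt_of_ne hq with h | h
  · refine ⟨?_, h⟩
    by_contra g1
    rw [if_pos g1, if_pos h] at hno
    omega
  · exfalso
    have h2 : ¬ w.right⁻¹ k < w.right⁻¹ k' := asymm h
    by_cases g1 : w.left k' ≠ 1
    · rw [if_pos g1, if_neg h2] at hno; omega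
    · rw [if_neg g1, if_pos h, if_neg h2] at hno; omega -- check

open SemidirectProduct Finset Equiv

variable {r : ℕ}

lemma sB_eq {i : ℕ} (h1 : 1 ≤ i) (h2 : i < r) :
    sB r i = ⟨1, Equiv.swap ⟨i - 1, by omega⟩ ⟨i, h2⟩⟩ := dif_pos ⟨h1, h2⟩

lemma eVec_sq (j : Fin r) : eVec r j * eVec r j = 1 := by
  funext v
  show eVec r j v * eVec r j v = 1
  unfold eVec
  split_ifs <;> decide

lemma t0_sq (hr : 0 < r) : tB r 0 * tB r 0 = 1 := by
  rw [t0_eq hr]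
  show (⟨eVec r ⟨0, hr⟩ * (permAct r 1) (eVec r ⟨0, hr⟩), 1 * 1⟩ : WB r) = 1
  rw [map_one, one_mul]
  show (⟨eVec r ⟨0, hr⟩ * eVec r ⟨0, hr⟩, 1⟩ : WB r) = 1
  rw [eVec_sq]
  rfl

lemma swap_sq (k k' : Fin r) :
    (⟨1, Equiv.swap k k'⟩ : WB r) * ⟨1, Equiv.swap k k'⟩ = 1 := by
  show (⟨1 * (permAct r (Equiv.swap k k')) 1, Equiv.swap k k' * Equiv.swap k k'⟩ : WB r) = 1
  rw [map_one, Equiv.swap_mul_self]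
  rfl

lemma gen_step (hr : 0 < r) {s : WB r} (hs : s ∈ genS r) (w : WB r) :
    LB (s * w) = LB w + 1 ∨ LB (s * w) + 1 = LB w := by
  rcases hs with h | ⟨i, h1, h2, rfl⟩
  · rw [Set.mem_singleton_iff] at h
    subst h
    by_cases h0 : w.left ⟨0, hr⟩ = 1
    · exact Or.inl (LB_t0_asc hr h0)
    · exact Or.inr (LB_t0_desc hr h0)
  · rw [sB_eq h1 h2]
    exact LB_swap_step (by show i - 1 + 1 = i; omega) w

lemma descent_or_one (hr : 0 < r) (w : WB r) :
    w = 1 ∨ ∃ s ∈ genS r, s * s = 1 ∧ LB (s * w) + 1 = LB w := by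
  by_cases h0 : w.left ⟨0, hr⟩ = 1
  swap
  · exact Or.inr ⟨tB r 0, Or.inl rfl, t0_sq hr, LB_t0_desc hr h0⟩
  by_cases hdesc : ∃ m : ℕ, ∃ hm : m + 1 < r,
      Ahat w ⟨m, by omega⟩ ⟨m + 1, hm⟩ = Ahat w ⟨m + 1, hm⟩ ⟨m, by omega⟩ + 1
  · obtain ⟨m, hm, hd⟩ := hdesc
    right
    refine ⟨sB r (m + 1), Or.inr ⟨m + 1, by omega, hm, rfl⟩, ?_, ?_⟩
    · rw [sB_eq (by omega) hm]; exact swap_sq _ _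
    · rw [sB_eq (by omega) hm]
      exact LB_swap_desc (by show m + 1 - 1 + 1 = m + 1; omega) w hd.symm
  · left
    push_neg at hdesc
    have hno : ∀ (m : ℕ) (hm : m + 1 < r),
        Ahat w ⟨m, by omega⟩ ⟨m + 1, hm⟩ ≤ Ahat w ⟨m + 1, hm⟩ ⟨m, by omega⟩ := by
      intro m hm
      have hne : (⟨m, by omega⟩ : Fin r) ≠ ⟨m + 1, hm⟩ := by simp [Fin.ext_iff]
      rcases Ahat_dichot w hne with h | h
      · exact absurd h (hdesc m hm)
      · omega
    have hall : ∀ (m : ℕ) (hm : m < r), w.left ⟨m, hm⟩ = 1 := by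
      intro m
      induction m with
      | zero => intro hm; exact h0
      | succ n ih =>
        intro hm
        have h1 := ih (by omega)
        have hne : (⟨n, by omega⟩ : Fin r) ≠ ⟨n + 1, hm⟩ := by simp [Fin.ext_iff]
        exact (no_descent_char hne (hno n hm) h1).1
    have hadj : ∀ (m : ℕ) (hm : m + 1 < r),
        w.right⁻¹ ⟨m, by omega⟩ < w.right⁻¹ ⟨m + 1, hm⟩ := by
      intro m hm
      have hne : (⟨m, by omega⟩ : Fin r) ≠ ⟨m + 1, hm⟩ := by simp [Fin.ext_iff]
      exact (no_descent_char hne (hno m hm) (hall m (by omega))).2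
    obtain ⟨n, rfl⟩ : ∃ n, r = n + 1 := ⟨r - 1, by omega⟩
    have hmono : StrictMono (fun v : Fin (n + 1) => w.right⁻¹ v) := by
      rw [Fin.strictMono_iff_lt_succ]
      intro i
      have hi : (i : ℕ) + 1 < n + 1 := by omega
      have := hadj i.val hi
      exact this
    have hid : (fun v : Fin (n + 1) => w.right⁻¹ v) = id := by
      apply (hmono.range_inj strictMono_id).mp
      rw [Set.range_id]
      exact Equiv.range_eq_univ _
    have hR : w.right = 1 := by
      have h1 : w.right⁻¹ = 1 := Equiv.Perm.ext fun v => congrFun hid v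
      rwa [inv_eq_one] at h1
    have hL : w.left = 1 := by
      funext v
      have := hall v.val v.isLt
      simpa using this
    obtain ⟨c, σ⟩ := w
    simp only at hL hR
    rw [hL, hR]
    rfl

lemma LB_le_length (hr : 0 < r) (l : List (WB r)) (h : ∀ x ∈ l, x ∈ genS r) :
    LB l.prod ≤ l.length := by
  induction l with
  | nil => simp [LB_one]
  | cons s t ih =>
    have hs := h s List.mem_cons_self
    have ht := ih fun x hx => h x (List.mem_cons_of_mem _ hx)
    rw [List.prod_cons]
    rcases gen_step hr hs t.prod with h' | h' <;> simp only [List.length_cons] <;> omega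

lemma exists_word (hr : 0 < r) (w : WB r) :
    ∃ l : List (WB r), (∀ x ∈ l, x ∈ genS r) ∧ l.length = LB w ∧ l.prod = w := by
  generalize hn : LB w = n
  induction n using Nat.strong_induction_on generalizing w with
  | _ n ih =>
    rcases descent_or_one hr w with rfl | ⟨s, hs, hss, hdesc⟩
    · exact ⟨[], by simp, by simp [← hn, LB_one], rfl⟩
    · have hlt : LB (s * w) < n := by omega
      obtain ⟨l, hl1, hl2, hl3⟩ := ih (LB (s * w)) hlt (s * w) rfl
      refine ⟨s :: l, ?_, ?_, ?_⟩
      · intro x hx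
        rcases List.mem_cons.mp hx with rfl | hx
        · exact hs
        · exact hl1 x hx
      · simp only [List.length_cons, hl2]; omega
      · rw [List.prod_cons, hl3, ← mul_assoc, hss, one_mul]

lemma len_eq_LB (hr : 0 < r) (w : WB r) : len r w = LB w := by
  obtain ⟨l, hl1, hl2, hl3⟩ := exists_word hr w
  have hmem : LB w ∈ {n | ∃ l : List (WB r), (∀ x ∈ l, x ∈ genS r) ∧ l.length = n ∧ l.prod = w} :=
    ⟨l, hl1, hl2, hl3⟩
  apply le_antisymm
  · exact Nat.sInf_le hmem
  · obtain ⟨l', h1, h2, h3⟩ := Nat.sInf_mem (Set.nonempty_of_mem hmem)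
    calc LB w = LB l'.prod := by rw [h3]
    _ ≤ l'.length := LB_le_length hr l' h1
    _ = len r w := h2

open SemidirectProduct Finset Equiv

variable {r : ℕ}

lemma WB_ext {x y : WB r} (h1 : x.left = y.left) (h2 : x.right = y.right) : x = y := by
  cases x; cases y
  simp only [SemidirectProduct.left, SemidirectProduct.right] at h1 h2
  subst h1; subst h2; rfl

lemma tB_fin (j : Fin r) : tB r (j : ℕ) = ⟨eVec r j, 1⟩ := by
  unfold tB
  rw [dif_pos j.isLt]

lemma tB_mul_left (j : Fin r) (w : WB r) : (tB r (j : ℕ) * w).left = eVec r j * w.left := by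
  rw [tB_fin, mul_left]
  show eVec r j * (permAct r 1) w.left = _
  rw [map_one]
  rfl

lemma tB_mul_right (j : Fin r) (w : WB r) : (tB r (j : ℕ) * w).right = w.right := by
  rw [tB_fin, mul_right]
  exact one_mul _

lemma tB_sq (j : Fin r) : tB r (j : ℕ) * tB r (j : ℕ) = 1 := by
  rw [tB_fin]
  show (⟨eVec r j * (permAct r 1) (eVec r j), 1 * 1⟩ : WB r) = 1
  rw [map_one, one_mul]
  show (⟨eVec r j * eVec r j, 1⟩ : WB r) = 1
  rw [eVec_sq]
  rfl

lemma tB_mem_Comega {a : ℕ} {j : Fin r} (hj : (j : ℕ) < a) : tB r (j : ℕ) ∈ Comega r a :=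
  Subgroup.subset_closure ⟨(j : ℕ), hj, rfl⟩

lemma mulN_left (c' : NB r) (w : WB r) : ((⟨c', 1⟩ : WB r) * w).left = c' * w.left := by
  rw [mul_left]
  show c' * (permAct r 1) w.left = _
  rw [map_one]
  rfl

lemma mulN_right (c' : NB r) (w : WB r) : ((⟨c', 1⟩ : WB r) * w).right = w.right := by
  rw [mul_right]
  exact one_mul _

lemma mulNr_left (c'' : NB r) (w : WB r) :
    (w * (⟨c'', 1⟩ : WB r)).left = w.left * fun v => c'' (w.right.symm v) := by
  rw [mul_left]
  rfl

lemma mulNr_right (c'' : NB r) (w : WB r) : (w * (⟨c'', 1⟩ : WB r)).right = w.right := by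
  rw [mul_right]
  exact mul_one _

lemma mem_Comega_iff {a : ℕ} {x : WB r} :
    x ∈ Comega r a ↔ x.right = 1 ∧ ∀ v : Fin r, a ≤ (v : ℕ) → x.left v = 1 := by
  constructor
  · intro hx
    induction hx using Subgroup.closure_induction with
    | mem w hw =>
      obtain ⟨i, hia, rfl⟩ := hw
      by_cases hir : i < r
      · rw [show tB r i = ⟨eVec r ⟨i, hir⟩, 1⟩ from dif_pos hir]
        refine ⟨rfl, fun v hv => ?_⟩
        show eVec r ⟨i, hir⟩ v = 1
        unfold eVec
        rw [if_neg]
        intro h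
        rw [h] at hv
        simp at hv
        -- hv : a ≤ i, but i < a
        omega
      · rw [show tB r i = 1 from dif_neg hir]
        exact ⟨rfl, fun v _ => rfl⟩
    | one => exact ⟨rfl, fun v _ => rfl⟩
    | mul x y hx hy ihx ihy =>
      obtain ⟨hx1, hx2⟩ := ihx
      obtain ⟨hy1, hy2⟩ := ihy
      refine ⟨by rw [mul_right, hx1, hy1, one_mul], fun v hv => ?_⟩
      rw [mul_left, hx1, map_one]
      show x.left v * y.left v = 1
      rw [hx2 v hv, hy2 v hv, one_mul]
    | inv x hx ihx =>
      obtain ⟨hx1, hx2⟩ := ihx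
      refine ⟨by rw [inv_right, hx1, inv_one], fun v hv => ?_⟩
      rw [inv_left, hx1, inv_one, map_one]
      show (x.left v)⁻¹ = 1
      rw [hx2 v hv, inv_one]
  · rintro ⟨hR, hL⟩
    have key : ∀ n (x : WB r), wt x.left = n → x.right = 1 →
        (∀ v : Fin r, a ≤ (v : ℕ) → x.left v = 1) → x ∈ Comega r a := by
      intro n
      induction n using Nat.strong_induction_on with
      | _ n ih =>
        intro x hn hR hL
        by_cases h0 : wt x.left = 0
        · have hx1 : x.left = 1 := by
            funext v
            show x.left v = 1
            by_contra hv
            have : v ∈ Finset.univ.filter fun i => x.left i ≠ 1 := by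
              simp [hv]
            rw [Finset.card_eq_zero.mp h0] at this
            exact absurd this (Finset.notMem_empty v)
          have : x = 1 := WB_ext (by rw [hx1]; rfl) (by rw [hR]; rfl)
          rw [this]
          exact one_mem _
        · have hne : (Finset.univ.filter fun i => x.left i ≠ 1).Nonempty := by
            rw [Finset.nonempty_iff_ne_empty]
            intro h
            exact h0 (by unfold wt; rw [h]; rfl)
          obtain ⟨j, hj⟩ := hne
          rw [Finset.mem_filter] at hj
          have hjne : x.left j ≠ 1 := hj.2
          have hja : (j : ℕ) < a := by
            by_contra h
            exact hjne (hL j (by omega))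
          set x' := tB r (j : ℕ) * x with hx'
          have hx'l : x'.left = eVec r j * x.left := tB_mul_left j x
          have hx'r : x'.right = 1 := by rw [hx', tB_mul_right, hR]
          have hwt : wt x'.left + 1 = wt x.left := by
            rw [hx'l]; exact wt_toggle_ne hjne
          have hL' : ∀ v : Fin r, a ≤ (v : ℕ) → x'.left v = 1 := by
            intro v hv
            rw [hx'l]
            show eVec r j v * x.left v = 1
            have hvj : v ≠ j := by
              intro h; rw [h] at hv; omega
            rw [show eVec r j v = 1 from if_neg hvj, one_mul]
            exact hL v hv
          have hx'mem : x' ∈ Comega r a := ih (wt x'.left) (by omega) x' rfl hx'r hL'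
          have : x = tB r (j : ℕ) * x' := by
            rw [hx', ← mul_assoc, tB_sq, one_mul]
          rw [this]
          exact Subgroup.mul_mem _ (tB_mem_Comega hja) hx'mem
    exact key (wt x.left) x rfl hR hL

/-- pointwise dominance giving `LB d ≤ LB (x * d)` when the supports are disjoint -/
lemma LB_le_mulN (c' : NB r) (d : WB r) (hdisj : ∀ v, c' v ≠ 1 → d.left v = 1) :
    LB d ≤ LB ((⟨c', 1⟩ : WB r) * d) := by
  have hL : ((⟨c', 1⟩ : WB r) * d).left = c' * d.left := mulN_left c' d
  have hR : ((⟨c', 1⟩ : WB r) * d).right = d.right := mulN_right c' d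
  have hwt : wt d.left ≤ wt (((⟨c', 1⟩ : WB r) * d).left) := by
    rw [hL]
    apply Finset.card_le_card
    intro v hv
    rw [Finset.mem_filter] at hv ⊢
    refine ⟨Finset.mem_univ v, ?_⟩
    have hc' : c' v = 1 := by
      by_contra h
      exact hv.2 (hdisj v h)
    show c' v * d.left v ≠ 1
    rw [hc', one_mul]
    exact hv.2
  have hps : pairSum d ≤ pairSum ((⟨c', 1⟩ : WB r) * d) := by
    unfold pairSum
    apply Finset.sum_le_sum
    intro p _
    by_cases hp : p.1 < p.2
    · rw [if_pos hp, if_pos hp]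
      unfold Ahat
      rw [hL, hR]
      by_cases hc : c' p.2 = 1
      · rw [show (c' * d.left) p.2 = d.left p.2 by show c' p.2 * d.left p.2 = _; rw [hc, one_mul]]
      · have hd2 : d.left p.2 = 1 := hdisj p.2 hc
        have : (c' * d.left) p.2 ≠ 1 := by
          show c' p.2 * d.left p.2 ≠ 1
          rw [hd2, mul_one]; exact hc
        rw [if_pos this, if_neg (by simpa using hd2)]
        split_ifs <;> omega
    · rw [if_neg hp, if_neg hp]
  unfold LB
  omega

/-- toggling a nonzero coordinate decreases the length -/
lemma LB_tB_desc (j : Fin r) (d : WB r) (hj : d.left j ≠ 1) :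
    LB (tB r (j : ℕ) * d) + 1 ≤ LB d := by
  have hL := tB_mul_left j d
  have hR := tB_mul_right j d
  have hwt : wt ((tB r (j : ℕ) * d).left) + 1 = wt d.left := by
    rw [hL]; exact wt_toggle_ne hj
  have hps : pairSum (tB r (j : ℕ) * d) ≤ pairSum d := by
    unfold pairSum
    apply Finset.sum_le_sum
    intro p _
    by_cases hp : p.1 < p.2
    · rw [if_pos hp, if_pos hp]
      unfold Ahat
      rw [hL, hR]
      by_cases hpj : p.2 = j
      · subst hpj
        have : (eVec r p.2 * d.left) p.2 = 1 := by
          show eVec r p.2 p.2 * d.left p.2 = 1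
          rw [show eVec r p.2 p.2 = Multiplicative.ofAdd 1 from if_pos rfl]
          exact M2.ofAdd_mul_eq_one hj
        rw [if_pos (show d.left p.2 ≠ 1 from hj),
          if_neg (show ¬((eVec r p.2 * d.left) p.2 ≠ 1) from by simpa using this)]
        split_ifs <;> omega
      · have : (eVec r j * d.left) p.2 = d.left p.2 := by
          show eVec r j p.2 * d.left p.2 = _
          rw [show eVec r j p.2 = 1 from if_neg hpj, one_mul]
        rw [this]
    · rw [if_neg hp, if_neg hp]
  unfold LB
  omega

lemma dright_iff (hr : 0 < r) {a : ℕ} (d : WB r) :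
    d ∈ Dright r a ↔ ∀ v : Fin r, (v : ℕ) < a → d.left v = 1 := by
  constructor
  · intro hd v hv
    by_contra hne
    have hle := hd _ (tB_mem_Comega hv)
    rw [len_eq_LB hr, len_eq_LB hr] at hle
    have := LB_tB_desc v d hne
    omega
  · intro hv w hw
    rw [mem_Comega_iff] at hw
    obtain ⟨hw1, hw2⟩ := hw
    rw [len_eq_LB hr, len_eq_LB hr]
    have hw' : w = ⟨w.left, 1⟩ := WB_ext rfl hw1
    rw [hw']
    apply LB_le_mulN
    intro v hvne
    apply hv
    by_contra h
    exact hvne (hw2 v (by omega))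

open SemidirectProduct Finset Equiv

variable {r : ℕ}

lemma M2.mul_ne_one_cases {x y : M2} (h : x * y ≠ 1) : x ≠ 1 ∨ y ≠ 1 := by
  revert h; revert x y; decide

lemma M2.xyx (x y : M2) : x * y * x = y := by
  revert x y; decide

lemma wt_one : wt (1 : NB r) = 0 := by
  unfold wt
  simp

lemma inv_left_apply (d : WB r) (i : Fin r) : d⁻¹.left i = (d.left (d.right i))⁻¹ := rfl

lemma conj_eq (d : WB r) (c' : NB r) :
    d⁻¹ * ⟨c', 1⟩ * d = ⟨fun v => c' (d.right v), 1⟩ := by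
  apply WB_ext
  · funext v
    show (d⁻¹ * ⟨c', 1⟩ * d).left v = c' (d.right v)
    simp only [mul_left, mul_right, inv_left, inv_right, mul_one, Pi.mul_apply, Pi.inv_apply,
      permAct_apply, Equiv.Perm.inv_def, Equiv.symm_symm]
    rw [mul_comm ((d.left (d.right v))⁻¹) (c' (d.right v)), mul_assoc, inv_mul_cancel, mul_one]
  · show (d⁻¹ * ⟨c', 1⟩ * d).right = 1
    simp only [mul_right, inv_right, mul_one]
    exact inv_mul_cancel _

lemma permAct_eVec (σ : Equiv.Perm (Fin r)) (i : Fin r) :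
    (fun v => eVec r i (σ.symm v)) = eVec r (σ i) := by
  funext v
  unfold eVec
  by_cases h : v = σ i
  · rw [if_pos (by rw [h]; exact σ.symm_apply_apply i), if_pos h]
  · rw [if_neg, if_neg h]
    intro hh
    exact h (by rw [← σ.apply_symm_apply v, hh])

lemma n0_mk (c : NB r) (g : Equiv.Perm (Fin r)) : n0 r (⟨c, g⟩ : WB r) = wt c := rfl

theorem stmt3_aux (a b : ℕ) (hr : 2 ≤ r) (ha : a ≤ r) (hb : b ≤ r) (d : WB r) :
    (d ∈ Dright r a ↔ ∀ x ∈ Comega r a, n0 r (x * d) = n0 r x + n0 r d) ∧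
    (d ∈ D0 r a b ↔
      ∀ x ∈ Comega r a, ∀ y ∈ Comega r b,
        n0 r (x * d * y) = n0 r x + n0 r d + n0 r y) := by
  have hr0 : 0 < r := by omega
  -- Part (i)
  have part1 : d ∈ Dright r a ↔ ∀ x ∈ Comega r a, n0 r (x * d) = n0 r x + n0 r d := by
    rw [dright_iff hr0]
    constructor
    · intro hch x hx
      rw [mem_Comega_iff] at hx
      obtain ⟨hx1, hx2⟩ := hx
      rw [show x = (⟨x.left, 1⟩ : WB r) from WB_ext rfl hx1]
      rw [n0_eq_wt, n0_mk, n0_eq_wt, mulN_left]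
      apply wt_add_of_disjoint
      intro v hv
      apply hch
      by_contra h
      exact hv (hx2 v (by omega))
    · intro hn v hv
      by_contra hne
      have h1 := hn (tB r (v : ℕ)) (tB_mem_Comega hv)
      rw [n0_eq_wt, n0_eq_wt, n0_eq_wt, tB_mul_left, tB_fin] at h1
      rw [show ((⟨eVec r v, 1⟩ : WB r)).left = eVec r v from rfl, wt_eVec] at h1
      have h2 := wt_toggle_ne hne
      omega
  refine ⟨part1, ?_⟩
  -- Part (ii)
  have hP2equiv : (d⁻¹ ∈ Dright r b) ↔ ∀ i : Fin r, (i : ℕ) < b → d.left (d.right i) = 1 := by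
    rw [dright_iff hr0]
    constructor
    · intro h i hi
      have := h i hi
      rw [inv_left_apply, inv_eq_one] at this
      exact this
    · intro h i hi
      rw [inv_left_apply, inv_eq_one]
      exact h i hi
  have hP3equiv : (∀ x ∈ Comega r a, d⁻¹ * x * d ∈ Comega r b → x = 1)
      ↔ ∀ i : Fin r, (i : ℕ) < b → a ≤ ((d.right i : Fin r) : ℕ) := by
    constructor
    · intro htriv i hi
      by_contra h
      push_neg at h
      have hmem : tB r ((d.right i : Fin r) : ℕ) ∈ Comega r a := tB_mem_Comega h
      have hconj : d⁻¹ * tB r ((d.right i : Fin r) : ℕ) * d ∈ Comega r b := by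
        rw [tB_fin, conj_eq, mem_Comega_iff]
        refine ⟨rfl, fun v hv => ?_⟩
        show eVec r (d.right i) (d.right v) = 1
        unfold eVec
        rw [if_neg]
        intro hh
        have hvi : v = i := d.right.injective hh
        have : (v : ℕ) = (i : ℕ) := by rw [hvi]
        omega
      have heq := htriv _ hmem hconj
      rw [tB_fin] at heq
      have h2 := congrFun (congrArg SemidirectProduct.left heq) (d.right i)
      rw [show ((⟨eVec r (d.right i), 1⟩ : WB r)).left = eVec r (d.right i) from rfl] at h2
      rw [show eVec r (d.right i) (d.right i) = Multiplicative.ofAdd 1 from if_pos rfl] at h2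
      rw [show (1 : WB r).left (d.right i) = 1 from rfl] at h2
      exact absurd h2 (by decide)
    · intro hP3 x hx hconj
      rw [mem_Comega_iff] at hx
      obtain ⟨hx1, hx2⟩ := hx
      rw [show x = (⟨x.left, 1⟩ : WB r) from WB_ext rfl hx1] at hconj ⊢
      rw [conj_eq, mem_Comega_iff] at hconj
      obtain ⟨-, hc2⟩ := hconj
      refine WB_ext ?_ rfl
      funext j
      show x.left j = 1
      by_contra hj
      have hja : (j : ℕ) < a := by
        by_contra h
        exact hj (hx2 j (by omega))
      have hv : x.left (d.right (d.right.symm j)) ≠ 1 := by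
        rw [Equiv.apply_symm_apply]; exact hj
      have hvb : ((d.right.symm j : Fin r) : ℕ) < b := by
        by_contra h
        exact hv (hc2 _ (by omega))
      have := hP3 _ hvb
      rw [Equiv.apply_symm_apply] at this
      omega
  have claimA : d ∈ D0 r a b ↔
      ((∀ v : Fin r, (v : ℕ) < a → d.left v = 1)
        ∧ (∀ i : Fin r, (i : ℕ) < b → d.left (d.right i) = 1)
        ∧ (∀ i : Fin r, (i : ℕ) < b → a ≤ ((d.right i : Fin r) : ℕ))) := by
    have hD0 : d ∈ D0 r a b ↔ ((d ∈ Dright r a ∧ d⁻¹ ∈ Dright r b) ∧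
        ∀ x ∈ Comega r a, d⁻¹ * x * d ∈ Comega r b → x = 1) := Iff.rfl
    rw [hD0, dright_iff hr0, hP2equiv, hP3equiv]
    tauto
  have claimB : (∀ x ∈ Comega r a, ∀ y ∈ Comega r b,
        n0 r (x * d * y) = n0 r x + n0 r d + n0 r y) ↔
      ((∀ v : Fin r, (v : ℕ) < a → d.left v = 1)
        ∧ (∀ i : Fin r, (i : ℕ) < b → d.left (d.right i) = 1)
        ∧ (∀ i : Fin r, (i : ℕ) < b → a ≤ ((d.right i : Fin r) : ℕ))) := by
    constructor
    · intro h
      refine ⟨?_, ?_, ?_⟩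
      · intro v hv
        by_contra hne
        have h1 := h (tB r (v : ℕ)) (tB_mem_Comega hv) 1 (one_mem _)
        rw [mul_one] at h1
        rw [n0_eq_wt, n0_eq_wt, n0_eq_wt, n0_eq_wt, tB_mul_left, tB_fin] at h1
        rw [show ((⟨eVec r v, 1⟩ : WB r)).left = eVec r v from rfl, wt_eVec] at h1
        rw [show (1 : WB r).left = (1 : NB r) from rfl, wt_one] at h1
        have h2 := wt_toggle_ne hne
        omega
      · intro i hi
        by_contra hne
        have h1 := h 1 (one_mem _) (tB r (i : ℕ)) (tB_mem_Comega hi)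
        rw [one_mul] at h1
        have hl : (d * tB r (i : ℕ)).left = d.left * eVec r (d.right i) := by
          rw [tB_fin, mulNr_left, permAct_eVec]
        rw [n0_eq_wt, n0_eq_wt, n0_eq_wt, n0_eq_wt, hl, mul_comm d.left _] at h1
        rw [tB_fin] at h1
        rw [show ((⟨eVec r i, 1⟩ : WB r)).left = eVec r i from rfl, wt_eVec] at h1
        rw [show (1 : WB r).left = (1 : NB r) from rfl, wt_one] at h1
        have h2 := wt_toggle_ne hne
        omega
      · intro i hi
        by_contra hge
        push_neg at hge
        have h1 := h (tB r ((d.right i : Fin r) : ℕ)) (tB_mem_Comega hge)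
          (tB r (i : ℕ)) (tB_mem_Comega hi)
        have hl : (tB r ((d.right i : Fin r) : ℕ) * d * tB r (i : ℕ)).left = d.left := by
          rw [tB_fin (d.right i), tB_fin i, mulNr_left]
          rw [mulN_right, mulN_left, permAct_eVec]
          funext v
          exact M2.xyx (eVec r (d.right i) v) (d.left v)
        rw [n0_eq_wt, n0_eq_wt, n0_eq_wt, n0_eq_wt, hl, tB_fin, tB_fin] at h1
        rw [show ((⟨eVec r (d.right i), 1⟩ : WB r)).left = eVec r (d.right i) from rfl] at h1
        rw [show ((⟨eVec r i, 1⟩ : WB r)).left = eVec r i from rfl, wt_eVec, wt_eVec] at h1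
        omega
    · rintro ⟨p1, p2, p3⟩ x hx y hy
      rw [mem_Comega_iff] at hx hy
      obtain ⟨hx1, hx2⟩ := hx
      obtain ⟨hy1, hy2⟩ := hy
      rw [show x = (⟨x.left, 1⟩ : WB r) from WB_ext rfl hx1,
        show y = (⟨y.left, 1⟩ : WB r) from WB_ext rfl hy1]
      have hl : ((⟨x.left, 1⟩ : WB r) * d * ⟨y.left, 1⟩).left
          = (x.left * d.left) * fun v => y.left (((⟨x.left, 1⟩ : WB r) * d).right.symm v) := by
        rw [mulNr_left, mulN_left]
      rw [n0_eq_wt, n0_mk, n0_eq_wt, n0_mk, hl]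
      have hrr : ((⟨x.left, 1⟩ : WB r) * d).right = d.right := mulN_right x.left d
      rw [hrr]
      have d1 : ∀ v, x.left v ≠ 1 → d.left v = 1 := by
        intro v hv
        apply p1
        by_contra hc
        exact hv (hx2 v (by omega))
      have d2 : ∀ v, (x.left * d.left) v ≠ 1 → (fun v => y.left (d.right.symm v)) v = 1 := by
        intro v hv
        show y.left (d.right.symm v) = 1
        by_contra hyv
        have hvb : ((d.right.symm v : Fin r) : ℕ) < b := by
          by_contra hc
          exact hyv (hy2 _ (by omega))
        have e1 : d.left v = 1 := by
          have := p2 _ hvb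
          rwa [Equiv.apply_symm_apply] at this
        have e2 : x.left v = 1 := by
          have h3 := p3 _ hvb
          rw [Equiv.apply_symm_apply] at h3
          exact hx2 v (by omega)
        apply hv
        show x.left v * d.left v = 1
        rw [e1, e2, one_mul]
      rw [wt_add_of_disjoint d2, wt_add_of_disjoint d1]
      have hcp : wt (fun v => y.left (d.right.symm v)) = wt y.left :=
        wt_comp_perm y.left d.right⁻¹
      rw [hcp]
  rw [claimA, claimB]

end Stmt3Aux

/-- For `a, b ≤ r` and `d ∈ W`:
(i) `d ∈ D_{ω_a}` iff `n₀(x·d) = n₀(x) + n₀(d)` for every `x ∈ C_{ω_a}`; and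
(ii) `d ∈ D⁰_{ω_a,ω_b}` iff `n₀(x·d·y) = n₀(x) + n₀(d) + n₀(y)` for every
`x ∈ C_{ω_a}` and every `y ∈ C_{ω_b}`. -/
theorem stmt3 (r a b : ℕ) (hr : 2 ≤ r) (ha : a ≤ r) (hb : b ≤ r) (d : WB r) :
    (d ∈ Dright r a ↔ ∀ x ∈ Comega r a, n0 r (x * d) = n0 r x + n0 r d) ∧
    (d ∈ D0 r a b ↔
      ∀ x ∈ Comega r a, ∀ y ∈ Comega r b,
        n0 r (x * d * y) = n0 r x + n0 r d + n0 r y) := by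
  exact Stmt3Aux.stmt3_aux a b hr ha hb d
end

section
/- For all integers a, b with 1 ≤ a ≤ r−1 and 0 ≤ b ≤ r, and every d ∈ D⁰_{ω_a,ω_b}: the four elements d, t_a·d, s_a·d, and s_a·t_a·d all belong to D⁰_{ω_{a−1},ω_b}. -/
open SemidirectProduct

namespace Stmt5Proof

variable {r : ℕ}

lemma zmod2_mul_self (x : Multiplicative (ZMod 2)) : x * x = 1 := by revert x; decide

lemma zmod2_eq (x : Multiplicative (ZMod 2)) : x = 1 ∨ x = Multiplicative.ofAdd 1 := by
  revert x; decide

lemma ofAdd_one_ne_one : (Multiplicative.ofAdd (1 : ZMod 2)) ≠ 1 := by decide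

lemma mul_left_apply (u w : WB r) (i : Fin r) :
    (u * w).left i = u.left i * w.left (u.right.symm i) := rfl

lemma mul_right_apply (u w : WB r) (j : Fin r) :
    (u * w).right j = u.right (w.right j) := rfl

lemma inv_left_apply (w : WB r) (i : Fin r) :
    (w⁻¹).left i = (w.left (w.right i))⁻¹ := rfl

lemma inv_right_apply (w : WB r) (i : Fin r) :
    (w⁻¹).right i = w.right.symm i := rfl

lemma wb_ext (u w : WB r) (h1 : u.left = w.left) (h2 : u.right = w.right) : u = w :=
  SemidirectProduct.ext h1 h2

lemma tB_eq (m : ℕ) (hm : m < r) : tB r m = ⟨eVec r ⟨m, hm⟩, 1⟩ := dif_pos hm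

lemma sB_eq (i : ℕ) (h1 : 1 ≤ i) (h2 : i < r) :
    sB r i = ⟨1, Equiv.swap ⟨i - 1, by omega⟩ ⟨i, h2⟩⟩ := dif_pos ⟨h1, h2⟩



/-- signed window value of `w` at position `j` (value in `±{1,…,r}`). -/
def vv (w : WB r) (j : Fin r) : ℤ :=
  if w.left (w.right j) = 1 then ((w.right j : ℕ) + 1 : ℤ) else -((w.right j : ℕ) + 1 : ℤ)

lemma vv_cases (w : WB r) (j : Fin r) :
    vv w j = ((w.right j : ℕ) + 1 : ℤ) ∨ vv w j = -((w.right j : ℕ) + 1 : ℤ) := by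
  unfold vv; split <;> simp

lemma vv_pos (w : WB r) (j : Fin r) (h : w.left (w.right j) = 1) :
    vv w j = ((w.right j : ℕ) + 1 : ℤ) := if_pos h

lemma vv_neg (w : WB r) (j : Fin r) (h : w.left (w.right j) ≠ 1) :
    vv w j = -((w.right j : ℕ) + 1 : ℤ) := if_neg h

def ff (w : WB r) (p : Fin r × Fin r) : ℕ :=
  (if (p.1 : ℕ) < (p.2 : ℕ) ∧ vv w p.2 < vv w p.1 then 1 else 0) +
  (if (p.1 : ℕ) ≤ (p.2 : ℕ) ∧ vv w p.1 + vv w p.2 < 0 then 1 else 0)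

def NN (w : WB r) : ℕ := ∑ p : Fin r × Fin r, ff w p

lemma ff_congr (w w' : WB r) (p : Fin r × Fin r)
    (h1 : vv w p.1 = vv w' p.1) (h2 : vv w p.2 = vv w' p.2) : ff w p = ff w' p := by
  unfold ff; rw [h1, h2]

lemma NN_one : NN (1 : WB r) = 0 := by
  unfold NN
  apply Finset.sum_eq_zero
  intro p _
  have h1 : ∀ j : Fin r, vv (1 : WB r) j = ((j : ℕ) + 1 : ℤ) := by
    intro j; unfold vv; simp
  unfold ff
  rw [h1, h1]
  have := p.1.2; have := p.2.2
  split_ifs <;> omega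

lemma sum_split_one {α : Type*} [Fintype α] [DecidableEq α] (f : α → ℕ) (p0 : α) :
    ∑ p, f p = (∑ p ∈ Finset.univ.erase p0, f p) + f p0 :=
  (Finset.sum_erase_add _ _ (Finset.mem_univ p0)).symm

lemma sum_split_two {α : Type*} [Fintype α] [DecidableEq α] (f : α → ℕ) (p1 p2 : α)
    (h : p1 ≠ p2) :
    ∑ p, f p = (∑ p ∈ (Finset.univ.erase p1).erase p2, f p) + f p1 + f p2 := by
  rw [sum_split_one f p1,
    (Finset.sum_erase_add _ f (Finset.mem_erase.2 ⟨h.symm, Finset.mem_univ p2⟩)).symm]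
  omega



lemma tB_mul_right (m : ℕ) (hm : m < r) (w : WB r) (j : Fin r) :
    (tB r m * w).right j = w.right j := by
  rw [tB_eq m hm]; rfl

lemma tB_mul_left (m : ℕ) (hm : m < r) (w : WB r) (i : Fin r) :
    (tB r m * w).left i = eVec r ⟨m, hm⟩ i * w.left i := by
  rw [tB_eq m hm]; rfl

lemma tB_sq (m : ℕ) : tB r m * tB r m = (1 : WB r) := by
  by_cases h : m < r
  · rw [tB_eq m h]
    apply wb_ext
    · funext i
      exact zmod2_mul_self _
    · exact mul_one 1
  · rw [tB, dif_neg h, mul_one]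

lemma vv_tB_of_ne (m : ℕ) (hm : m < r) (w : WB r) (j : Fin r)
    (hj : w.right j ≠ ⟨m, hm⟩) : vv (tB r m * w) j = vv w j := by
  unfold vv
  rw [tB_mul_right m hm, tB_mul_left m hm]
  rw [show eVec r ⟨m, hm⟩ (w.right j) = 1 from if_neg hj, one_mul]

lemma vv_tB_of_eq (m : ℕ) (hm : m < r) (w : WB r) (j : Fin r)
    (hj : w.right j = ⟨m, hm⟩) : vv (tB r m * w) j = -(vv w j) := by
  unfold vv
  rw [tB_mul_right m hm, tB_mul_left m hm]
  rw [show eVec r ⟨m, hm⟩ (w.right j) = Multiplicative.ofAdd 1 from if_pos hj]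
  rcases zmod2_eq (w.left (w.right j)) with h | h <;> rw [h]
  · rw [if_pos rfl, if_neg (by rw [mul_one]; exact ofAdd_one_ne_one)]
  · rw [if_pos (by decide), if_neg ofAdd_one_ne_one, neg_neg]



lemma right_ne_of_ne (w : WB r) {j q : Fin r} (h : j ≠ q) : w.right j ≠ w.right q :=
  fun hc => h (w.right.injective hc)

lemma val_ne_of_ne {j q : Fin r} (h : j ≠ q) : (j : ℕ) ≠ (q : ℕ) :=
  fun hc => h (Fin.ext hc)

/-- Flipping a positive value increases the statistic. -/
lemma NN_tB_pos (m : ℕ) (hm : m < r) (w : WB r) (h : w.left ⟨m, hm⟩ = 1) :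
    NN w + 1 ≤ NN (tB r m * w) := by
  set q0 := w.right.symm ⟨m, hm⟩ with hq0def
  have hq0 : w.right q0 = ⟨m, hm⟩ := w.right.apply_symm_apply _
  have hA : vv w q0 = ((m : ℤ) + 1) := by
    rw [vv_pos _ _ (by rw [hq0]; exact h), hq0]
  have hA' : vv (tB r m * w) q0 = -((m : ℤ) + 1) := by
    rw [vv_tB_of_eq m hm w q0 hq0, hA]
  have main : ∀ p ∈ Finset.univ.erase ((q0, q0) : Fin r × Fin r),
      ff w p ≤ ff (tB r m * w) p := by
    intro p hp
    have hpne : p ≠ (q0, q0) := (Finset.mem_erase.1 hp).1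
    by_cases e1 : p.1 = q0 <;> by_cases e2 : p.2 = q0
    · exact absurd (Prod.ext e1 e2) hpne
    · -- p = (q0, y)
      have hy : w.right p.2 ≠ ⟨m, hm⟩ := by rw [← hq0]; exact right_ne_of_ne w e2
      have hv2 : vv (tB r m * w) p.2 = vv w p.2 := vv_tB_of_ne m hm w p.2 hy
      have hk : ((w.right p.2 : ℕ) : ℤ) ≠ (m : ℤ) := by
        exact_mod_cast fun hc => hy (Fin.ext hc)
      have hn := vv_cases w p.2
      unfold ff
      rw [e1, hv2, hA, hA']
      split_ifs <;> omega
    · -- p = (x, q0)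
      have hy : w.right p.1 ≠ ⟨m, hm⟩ := by rw [← hq0]; exact right_ne_of_ne w e1
      have hv1 : vv (tB r m * w) p.1 = vv w p.1 := vv_tB_of_ne m hm w p.1 hy
      have hk : ((w.right p.1 : ℕ) : ℤ) ≠ (m : ℤ) := by
        exact_mod_cast fun hc => hy (Fin.ext hc)
      have hn := vv_cases w p.1
      unfold ff
      rw [e2, hv1, hA, hA']
      split_ifs <;> omega
    · refine le_of_eq (ff_congr _ _ _ ?_ ?_)
      · exact (vv_tB_of_ne m hm w p.1 (by rw [← hq0]; exact right_ne_of_ne w e1)).symm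
      · exact (vv_tB_of_ne m hm w p.2 (by rw [← hq0]; exact right_ne_of_ne w e2)).symm
  have diag : ff w ((q0, q0) : Fin r × Fin r) + 1 = ff (tB r m * w) (q0, q0) := by
    unfold ff
    dsimp only
    rw [hA, hA']
    split_ifs <;> omega
  rw [NN, NN, sum_split_one (ff w) (q0, q0), sum_split_one (ff (tB r m * w)) (q0, q0)]
  have := Finset.sum_le_sum main
  omega

/-- Flipping a negative value decreases the statistic. -/
lemma NN_tB_neg (m : ℕ) (hm : m < r) (w : WB r) (h : w.left ⟨m, hm⟩ ≠ 1) :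
    NN (tB r m * w) < NN w := by
  have hu : (tB r m * w).left ⟨m, hm⟩ = 1 := by
    rw [tB_mul_left m hm]
    rcases zmod2_eq (w.left ⟨m, hm⟩) with h1 | h1
    · exact absurd h1 h
    · rw [h1, eVec, if_pos rfl]; decide
  have := NN_tB_pos m hm (tB r m * w) hu
  rw [← mul_assoc, tB_sq, one_mul] at this
  omega

/-- Multiplying by the generator `t₁ = tB r 0` changes the statistic by at most 1. -/
lemma NN_tB_zero_le (h0 : 0 < r) (w : WB r) : NN (tB r 0 * w) ≤ NN w + 1 := by
  set q0 := w.right.symm ⟨0, h0⟩ with hq0def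
  have hq0 : w.right q0 = ⟨0, h0⟩ := w.right.apply_symm_apply _
  have hA : vv w q0 = 1 ∨ vv w q0 = -1 := by
    rcases vv_cases w q0 with h | h <;> rw [hq0] at h <;> simp at h <;> [left; right] <;>
      omega
  have hA' : vv (tB r 0 * w) q0 = -(vv w q0) := vv_tB_of_eq 0 h0 w q0 hq0
  have main : ∀ p ∈ Finset.univ.erase ((q0, q0) : Fin r × Fin r),
      ff (tB r 0 * w) p ≤ ff w p := by
    intro p hp
    have hpne : p ≠ (q0, q0) := (Finset.mem_erase.1 hp).1
    by_cases e1 : p.1 = q0 <;> by_cases e2 : p.2 = q0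
    · exact absurd (Prod.ext e1 e2) hpne
    · have hy : w.right p.2 ≠ ⟨0, h0⟩ := by rw [← hq0]; exact right_ne_of_ne w e2
      have hv2 : vv (tB r 0 * w) p.2 = vv w p.2 := vv_tB_of_ne 0 h0 w p.2 hy
      have hk : ((w.right p.2 : ℕ) : ℤ) ≠ 0 := by
        exact_mod_cast fun hc => hy (Fin.ext (by exact_mod_cast hc))
      have hn := vv_cases w p.2
      unfold ff
      rw [e1, hv2, hA']
      split_ifs <;> omega
    · have hy : w.right p.1 ≠ ⟨0, h0⟩ := by rw [← hq0]; exact right_ne_of_ne w e1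
      have hv1 : vv (tB r 0 * w) p.1 = vv w p.1 := vv_tB_of_ne 0 h0 w p.1 hy
      have hk : ((w.right p.1 : ℕ) : ℤ) ≠ 0 := by
        exact_mod_cast fun hc => hy (Fin.ext (by exact_mod_cast hc))
      have hn := vv_cases w p.1
      unfold ff
      rw [e2, hv1, hA']
      split_ifs <;> omega
    · refine le_of_eq (ff_congr _ _ _ ?_ ?_)
      · exact vv_tB_of_ne 0 h0 w p.1 (by rw [← hq0]; exact right_ne_of_ne w e1)
      · exact vv_tB_of_ne 0 h0 w p.2 (by rw [← hq0]; exact right_ne_of_ne w e2)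
  have diag : ff (tB r 0 * w) ((q0, q0) : Fin r × Fin r) ≤ ff w (q0, q0) + 1 := by
    unfold ff
    dsimp only
    rw [hA']
    split_ifs <;> omega
  rw [NN, NN, sum_split_one (ff w) (q0, q0), sum_split_one (ff (tB r 0 * w)) (q0, q0)]
  have := Finset.sum_le_sum main
  omega



lemma sB_mul_right (i : ℕ) (hi1 : 1 ≤ i) (hi2 : i < r) (w : WB r) (j : Fin r) :
    (sB r i * w).right j
      = Equiv.swap (⟨i - 1, by omega⟩ : Fin r) ⟨i, hi2⟩ (w.right j) := by
  rw [sB_eq i hi1 hi2]; rfl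

lemma sB_mul_left (i : ℕ) (hi1 : 1 ≤ i) (hi2 : i < r) (w : WB r) (x : Fin r) :
    (sB r i * w).left x
      = w.left (Equiv.swap (⟨i - 1, by omega⟩ : Fin r) ⟨i, hi2⟩ x) := by
  rw [sB_eq i hi1 hi2, mul_left_apply]
  dsimp only
  rw [Pi.one_apply, one_mul, Equiv.symm_swap]

lemma sB_sq (i : ℕ) : sB r i * sB r i = (1 : WB r) := by
  by_cases h : 0 < i ∧ i < r
  · rw [sB, dif_pos h]
    apply wb_ext
    · show (1 : NB r) * (permAct r _) 1 = 1
      rw [map_one, one_mul]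
    · exact Equiv.swap_mul_self _ _
  · rw [sB, dif_neg h, mul_one]

lemma vv_sB_of_ne (i : ℕ) (hi1 : 1 ≤ i) (hi2 : i < r) (w : WB r) (j : Fin r)
    (hj1 : w.right j ≠ ⟨i - 1, by omega⟩) (hj2 : w.right j ≠ ⟨i, hi2⟩) :
    vv (sB r i * w) j = vv w j := by
  have hr1 : (sB r i * w).right j = w.right j := by
    rw [sB_mul_right i hi1 hi2, Equiv.swap_apply_of_ne_of_ne hj1 hj2]
  have hl : (sB r i * w).left (w.right j) = w.left (w.right j) := by
    rw [sB_mul_left i hi1 hi2, Equiv.swap_apply_of_ne_of_ne hj1 hj2]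
  unfold vv
  rw [hr1, hl]

lemma vv_sB_q1 (i : ℕ) (hi1 : 1 ≤ i) (hi2 : i < r) (w : WB r) (j : Fin r)
    (hj : w.right j = ⟨i - 1, by omega⟩) :
    (vv w j = (i : ℤ) ∧ vv (sB r i * w) j = (i : ℤ) + 1) ∨
    (vv w j = -(i : ℤ) ∧ vv (sB r i * w) j = -((i : ℤ) + 1)) := by
  have hr1 : (sB r i * w).right j = ⟨i, hi2⟩ := by
    rw [sB_mul_right i hi1 hi2, hj, Equiv.swap_apply_left]
  have hl : (sB r i * w).left ((sB r i * w).right j) = w.left (w.right j) := by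
    rw [hr1, sB_mul_left i hi1 hi2, Equiv.swap_apply_right, hj]
  by_cases hs : w.left (w.right j) = 1
  · left
    constructor
    · rw [vv_pos _ _ hs, hj]; show ((i - 1 : ℕ) : ℤ) + 1 = (i : ℤ); omega
    · rw [vv, if_pos (by rw [hl]; exact hs), hr1]
  · right
    constructor
    · rw [vv_neg _ _ hs, hj]; show -(((i - 1 : ℕ) : ℤ) + 1) = -(i : ℤ); omega
    · rw [vv, if_neg (by rw [hl]; exact hs), hr1]

lemma vv_sB_q2 (i : ℕ) (hi1 : 1 ≤ i) (hi2 : i < r) (w : WB r) (j : Fin r)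
    (hj : w.right j = ⟨i, hi2⟩) :
    (vv w j = (i : ℤ) + 1 ∧ vv (sB r i * w) j = (i : ℤ)) ∨
    (vv w j = -((i : ℤ) + 1) ∧ vv (sB r i * w) j = -(i : ℤ)) := by
  have hr1 : (sB r i * w).right j = ⟨i - 1, by omega⟩ := by
    rw [sB_mul_right i hi1 hi2, hj, Equiv.swap_apply_right]
  have hl : (sB r i * w).left ((sB r i * w).right j) = w.left (w.right j) := by
    rw [hr1, sB_mul_left i hi1 hi2, Equiv.swap_apply_left, hj]
  by_cases hs : w.left (w.right j) = 1
  · left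
    constructor
    · rw [vv_pos _ _ hs, hj]
    · rw [vv, if_pos (by rw [hl]; exact hs), hr1]
      show ((i - 1 : ℕ) : ℤ) + 1 = (i : ℤ)
      omega
  · right
    constructor
    · rw [vv_neg _ _ hs, hj]
    · rw [vv, if_neg (by rw [hl]; exact hs), hr1]
      show -(((i - 1 : ℕ) : ℤ) + 1) = -(i : ℤ)
      omega



lemma NN_sB_skeleton (i : ℕ) (hi1 : 1 ≤ i) (hi2 : i < r) (w : WB r)
    (q1 q2 : Fin r) (hq1 : w.right q1 = ⟨i - 1, by omega⟩) (hq2 : w.right q2 = ⟨i, hi2⟩) :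
    NN (sB r i * w) + ff w (q1, q2) + ff w (q2, q1)
      = NN w + ff (sB r i * w) (q1, q2) + ff (sB r i * w) (q2, q1) := by
  have hne : q1 ≠ q2 := by
    intro h
    rw [h, hq2] at hq1
    have : i = i - 1 := by simpa using hq1
    omega
  have hp : ((q1, q2) : Fin r × Fin r) ≠ (q2, q1) := fun h => hne (Prod.ext_iff.1 h).1
  have hro1 : ∀ z : Fin r, z ≠ q1 → w.right z ≠ ⟨i - 1, by omega⟩ :=
    fun z hz hc => hz (w.right.injective (hc.trans hq1.symm))
  have hro2 : ∀ z : Fin r, z ≠ q2 → w.right z ≠ ⟨i, hi2⟩ :=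
    fun z hz hc => hz (w.right.injective (hc.trans hq2.symm))
  have hk1 : ∀ z : Fin r, z ≠ q1 → (w.right z : ℕ) ≠ i - 1 :=
    fun z hz hc => hro1 z hz (Fin.ext hc)
  have hk2 : ∀ z : Fin r, z ≠ q2 → (w.right z : ℕ) ≠ i :=
    fun z hz hc => hro2 z hz (Fin.ext hc)
  have hA := vv_sB_q1 i hi1 hi2 w q1 hq1
  have hB := vv_sB_q2 i hi1 hi2 w q2 hq2
  have mid : ∀ p ∈ (Finset.univ.erase ((q1, q2) : Fin r × Fin r)).erase (q2, q1),
      ff (sB r i * w) p = ff w p := by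
    intro p hp'
    have hne1 : p ≠ (q2, q1) := (Finset.mem_erase.1 hp').1
    have hne2 : p ≠ (q1, q2) := (Finset.mem_erase.1 (Finset.mem_erase.1 hp').2).1
    obtain ⟨x, y⟩ := p
    by_cases hx1 : x = q1 <;> by_cases hx2 : x = q2 <;>
      by_cases hy1 : y = q1 <;> by_cases hy2 : y = q2
    all_goals first
      | (exact absurd (hx1.symm.trans hx2) hne)
      | (exact absurd (hy1.symm.trans hy2) hne)
      | (exact absurd (by rw [hx1, hy2]) hne2)
      | (exact absurd (by rw [hx2, hy1]) hne1)
      | skip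
    -- remaining: (q1,q1), (q2,q2), (q1,off), (q2,off), (off,q1), (off,q2), (off,off)
    · -- x = q1, y = q1
      subst hx1; subst hy1
      unfold ff; dsimp only
      split_ifs <;> omega
    · -- x = q1, y off
      subst hx1
      have hv2 : vv (sB r i * w) y = vv w y := vv_sB_of_ne i hi1 hi2 w y (hro1 y hy1) (hro2 y hy2)
      have hn := vv_cases w y
      have hk1' := hk1 y hy1
      have hk2' := hk2 y hy2
      unfold ff; dsimp only
      rw [hv2]
      split_ifs <;> omega
    · -- x = q2, y = q2
      subst hx2; subst hy2
      unfold ff; dsimp only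
      split_ifs <;> omega
    · -- x = q2, y off
      subst hx2
      have hv2 : vv (sB r i * w) y = vv w y := vv_sB_of_ne i hi1 hi2 w y (hro1 y hy1) (hro2 y hy2)
      have hn := vv_cases w y
      have hk1' := hk1 y hy1
      have hk2' := hk2 y hy2
      unfold ff; dsimp only
      rw [hv2]
      split_ifs <;> omega
    · -- x off, y = q1
      subst hy1
      have hv1 : vv (sB r i * w) x = vv w x := vv_sB_of_ne i hi1 hi2 w x (hro1 x hx1) (hro2 x hx2)
      have hn := vv_cases w x
      have hk1' := hk1 x hx1
      have hk2' := hk2 x hx2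
      unfold ff; dsimp only
      rw [hv1]
      split_ifs <;> omega
    · -- x off, y = q2
      subst hy2
      have hv1 : vv (sB r i * w) x = vv w x := vv_sB_of_ne i hi1 hi2 w x (hro1 x hx1) (hro2 x hx2)
      have hn := vv_cases w x
      have hk1' := hk1 x hx1
      have hk2' := hk2 x hx2
      unfold ff; dsimp only
      rw [hv1]
      split_ifs <;> omega
    · -- both off
      exact ff_congr _ _ _ (vv_sB_of_ne i hi1 hi2 w x (hro1 x hx1) (hro2 x hx2))
        (vv_sB_of_ne i hi1 hi2 w y (hro1 y hy1) (hro2 y hy2))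
  have hmid : (∑ p ∈ (Finset.univ.erase ((q1, q2) : Fin r × Fin r)).erase (q2, q1),
      ff (sB r i * w) p)
      = ∑ p ∈ (Finset.univ.erase ((q1, q2) : Fin r × Fin r)).erase (q2, q1), ff w p :=
    Finset.sum_congr rfl mid
  rw [NN, NN, sum_split_two (ff (sB r i * w)) (q1, q2) (q2, q1) hp,
    sum_split_two (ff w) (q1, q2) (q2, q1) hp, hmid]
  omega



lemma NN_sB_le (i : ℕ) (hi1 : 1 ≤ i) (hi2 : i < r) (w : WB r) :
    NN (sB r i * w) ≤ NN w + 1 := by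
  set q1 := w.right.symm ⟨i - 1, by omega⟩ with hq1def
  set q2 := w.right.symm ⟨i, hi2⟩ with hq2def
  have hq1 : w.right q1 = ⟨i - 1, by omega⟩ := w.right.apply_symm_apply _
  have hq2 : w.right q2 = ⟨i, hi2⟩ := w.right.apply_symm_apply _
  have hA := vv_sB_q1 i hi1 hi2 w q1 hq1
  have hB := vv_sB_q2 i hi1 hi2 w q2 hq2
  have hsk := NN_sB_skeleton i hi1 hi2 w q1 q2 hq1 hq2
  have hvne : (q1 : ℕ) ≠ (q2 : ℕ) := by
    intro h
    have : q1 = q2 := Fin.ext h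
    rw [this, hq2] at hq1
    have : i = i - 1 := by simpa using hq1
    omega
  have hbd : ff (sB r i * w) (q1, q2) + ff (sB r i * w) (q2, q1)
      ≤ ff w (q1, q2) + ff w (q2, q1) + 1 := by
    unfold ff; dsimp only
    split_ifs <;> omega
  omega

lemma NN_sB_dec (i : ℕ) (hi1 : 1 ≤ i) (hi2 : i < r) (w : WB r)
    (q1 q2 : Fin r) (hq1 : w.right q1 = ⟨i - 1, by omega⟩) (hq2 : w.right q2 = ⟨i, hi2⟩)
    (hA : vv w q1 = (i : ℤ))
    (hB : vv w q2 = -((i : ℤ) + 1) ∨ (vv w q2 = (i : ℤ) + 1 ∧ (q2 : ℕ) < (q1 : ℕ))) :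
    NN (sB r i * w) < NN w := by
  have hA' := vv_sB_q1 i hi1 hi2 w q1 hq1
  have hB' := vv_sB_q2 i hi1 hi2 w q2 hq2
  have hsk := NN_sB_skeleton i hi1 hi2 w q1 q2 hq1 hq2
  have hvne : (q1 : ℕ) ≠ (q2 : ℕ) := by
    intro h
    have : q1 = q2 := Fin.ext h
    rw [this, hq2] at hq1
    have : i = i - 1 := by simpa using hq1
    omega
  have hbd : ff (sB r i * w) (q1, q2) + ff (sB r i * w) (q2, q1) + 1
      ≤ ff w (q1, q2) + ff w (q2, q1) := by
    unfold ff; dsimp only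
    split_ifs <;> omega
  omega



lemma NN_gen_le (s : WB r) (hs : s ∈ genS r) (w : WB r) : NN (s * w) ≤ NN w + 1 := by
  rcases hs with h | ⟨i, hi1, hi2, rfl⟩
  · rw [Set.mem_singleton_iff.1 h]
    by_cases h0 : 0 < r
    · exact NN_tB_zero_le h0 w
    · rw [tB, dif_neg (by omega), one_mul]; omega
  · exact NN_sB_le i hi1 hi2 w

lemma exists_dec (w : WB r) (hw : w ≠ 1) : ∃ s ∈ genS r, NN (s * w) < NN w := by
  by_cases hc : ∃ j : Fin r, w.left j ≠ 1
  · obtain ⟨j0, hj0⟩ := hc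
    set S : Finset (Fin r) := Finset.univ.filter (fun j => w.left j ≠ 1) with hS
    have hSne : S.Nonempty := ⟨j0, by simp [hS, hj0]⟩
    set m : Fin r := S.min' hSne with hm
    have hmS : w.left m ≠ 1 := by
      have := S.min'_mem hSne
      simp [hS] at this
      exact this
    have hmin : ∀ j : Fin r, w.left j ≠ 1 → m ≤ j := by
      intro j hj
      exact S.min'_le j (by simp [hS, hj])
    by_cases hm0 : (m : ℕ) = 0
    · refine ⟨tB r 0, Set.mem_union_left _ rfl, ?_⟩
      have h0 : 0 < r := lt_of_le_of_lt (Nat.zero_le _) m.isLt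
      exact NN_tB_neg 0 h0 w (by
        have : (⟨0, h0⟩ : Fin r) = m := Fin.ext hm0.symm
        rw [this]; exact hmS)
    · set i : ℕ := (m : ℕ) with hidef
      have hi1 : 1 ≤ i := by omega
      have hi2 : i < r := m.isLt
      refine ⟨sB r i, Set.mem_union_right _ ⟨i, hi1, hi2, rfl⟩, ?_⟩
      set q1 := w.right.symm ⟨i - 1, by omega⟩ with hq1def
      set q2 := w.right.symm ⟨i, hi2⟩ with hq2def
      have hq1 : w.right q1 = ⟨i - 1, by omega⟩ := w.right.apply_symm_apply _
      have hq2 : w.right q2 = ⟨i, hi2⟩ := w.right.apply_symm_apply _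
      have hpos : w.left ⟨i - 1, by omega⟩ = 1 := by
        by_contra hneg
        have := hmin _ hneg
        rw [Fin.le_def] at this
        simp at this
        omega
      have hA : vv w q1 = (i : ℤ) := by
        rw [vv_pos _ _ (by rw [hq1]; exact hpos), hq1]
        show ((i - 1 : ℕ) : ℤ) + 1 = (i : ℤ)
        omega
      have hB : vv w q2 = -((i : ℤ) + 1) := by
        rw [vv_neg _ _ (by rw [hq2]; exact (by rw [show (⟨i, hi2⟩ : Fin r) = m from Fin.ext rfl]; exact hmS)), hq2]
      exact NN_sB_dec i hi1 hi2 w q1 q2 hq1 hq2 hA (Or.inl hB)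
  · push_neg at hc
    have hσ : w.right ≠ 1 := by
      intro h
      exact hw (wb_ext _ _ (funext fun j => hc j) h)
    -- find a descent of σ.symm
    have hdesc : ∃ i, ∃ h1 : 1 ≤ i, ∃ h2 : i < r,
        (w.right.symm ⟨i, h2⟩ : ℕ) < (w.right.symm ⟨i - 1, by omega⟩ : ℕ) := by
      by_contra hno
      push_neg at hno
      have step : ∀ n (h : n + 1 < r),
          (w.right.symm ⟨n, by omega⟩ : ℕ) < (w.right.symm ⟨n + 1, h⟩ : ℕ) := by
        intro n h
        have h1 := hno (n + 1) (by omega) h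
        have hne : w.right.symm ⟨n + 1, h⟩ ≠ w.right.symm ⟨n, by omega⟩ := by
          intro hh
          have := w.right.symm.injective hh
          rw [Fin.mk.injEq] at this
          omega
        have : (w.right.symm ⟨n + 1, h⟩ : ℕ) ≠ (w.right.symm ⟨n, by omega⟩ : ℕ) :=
          fun hh => hne (Fin.ext hh)
        simp only [show n + 1 - 1 = n from rfl] at h1
        omega
      have mono : ∀ d n (h : n + d + 1 < r),
          (w.right.symm ⟨n, by omega⟩ : ℕ) < (w.right.symm ⟨n + d + 1, h⟩ : ℕ) := by
        intro d
        induction d with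
        | zero => intro n h; exact step n (by omega)
        | succ d ih =>
          intro n h
          calc (w.right.symm ⟨n, by omega⟩ : ℕ)
              < (w.right.symm ⟨n + d + 1, by omega⟩ : ℕ) := ih n (by omega)
            _ < _ := step (n + d + 1) (by omega)
      have ge : ∀ n (h : n < r), n ≤ (w.right.symm ⟨n, h⟩ : ℕ) := by
        intro n
        induction n with
        | zero => intro h; omega
        | succ n ih =>
          intro h
          have h1 := ih (by omega)
          have h2 := step n h
          omega
      have sums : ∑ k : Fin r, (w.right.symm k : ℕ) = ∑ k : Fin r, (k : ℕ) :=
        Equiv.sum_comp w.right.symm (fun k => (k : ℕ))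
      have eqall : ∀ k : Fin r, (k : ℕ) = (w.right.symm k : ℕ) := by
        have hle : ∀ k ∈ (Finset.univ : Finset (Fin r)), (k : ℕ) ≤ ((w.right.symm k : Fin r) : ℕ) :=
          fun k _ => by have := ge (k : ℕ) k.isLt; simpa using this
        have := (Finset.sum_eq_sum_iff_of_le hle).1 (by rw [sums])
        exact fun k => this k (Finset.mem_univ k)
      apply hσ
      have : w.right.symm = Equiv.refl (Fin r) := by
        apply Equiv.ext
        intro k
        exact (Fin.ext (eqall k).symm)
      have h2 : w.right = (Equiv.refl (Fin r)).symm := by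
        rw [← this]; exact (Equiv.symm_symm _).symm
      exact h2
    obtain ⟨i, hi1, hi2, hlt⟩ := hdesc
    refine ⟨sB r i, Set.mem_union_right _ ⟨i, hi1, hi2, rfl⟩, ?_⟩
    set q1 := w.right.symm ⟨i - 1, by omega⟩ with hq1def
    set q2 := w.right.symm ⟨i, hi2⟩ with hq2def
    have hq1 : w.right q1 = ⟨i - 1, by omega⟩ := w.right.apply_symm_apply _
    have hq2 : w.right q2 = ⟨i, hi2⟩ := w.right.apply_symm_apply _
    have hA : vv w q1 = (i : ℤ) := by
      rw [vv_pos _ _ (by rw [hq1]; exact hc _), hq1]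
      show ((i - 1 : ℕ) : ℤ) + 1 = (i : ℤ)
      omega
    have hB : vv w q2 = (i : ℤ) + 1 := by
      rw [vv_pos _ _ (by rw [hq2]; exact hc _), hq2]
    exact NN_sB_dec i hi1 hi2 w q1 q2 hq1 hq2 hA (Or.inr ⟨hB, hlt⟩)



lemma gen_sq (s : WB r) (hs : s ∈ genS r) : s * s = 1 := by
  rcases hs with h | ⟨i, _, _, rfl⟩
  · rw [Set.mem_singleton_iff.1 h]; exact tB_sq 0
  · exact sB_sq i

lemma exists_word : ∀ n (w : WB r), NN w ≤ n →
    ∃ l : List (WB r), (∀ x ∈ l, x ∈ genS r) ∧ l.length ≤ NN w ∧ l.prod = w := by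
  intro n
  induction n with
  | zero =>
    intro w hn
    by_cases hw : w = 1
    · exact ⟨[], by simp, by simp, by simp [hw]⟩
    · obtain ⟨s, _, hdec⟩ := exists_dec w hw
      omega
  | succ n ih =>
    intro w hn
    by_cases hw : w = 1
    · exact ⟨[], by simp, by simp, by simp [hw]⟩
    · obtain ⟨s, hs, hdec⟩ := exists_dec w hw
      obtain ⟨l, hl1, hl2, hl3⟩ := ih (s * w) (by omega)
      refine ⟨s :: l, ?_, ?_, ?_⟩
      · intro x hx
        rcases List.mem_cons.1 hx with h | h
        · rw [h]; exact hs
        · exact hl1 x h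
      · simp only [List.length_cons]; omega
      · rw [List.prod_cons, hl3, ← mul_assoc, gen_sq s hs, one_mul]

lemma NN_prod_le (l : List (WB r)) (h : ∀ x ∈ l, x ∈ genS r) : NN l.prod ≤ l.length := by
  induction l with
  | nil => simp [NN_one]
  | cons s l ih =>
    rw [List.prod_cons]
    have h1 := NN_gen_le s (h s List.mem_cons_self) l.prod
    have h2 := ih (fun x hx => h x (List.mem_cons_of_mem s hx))
    simp only [List.length_cons]
    omega

lemma len_eq_NN (w : WB r) : len r w = NN w := by
  obtain ⟨l, hl1, hl2, hl3⟩ := exists_word (NN w) w le_rfl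
  have hne : {n | ∃ l : List (WB r), (∀ x ∈ l, x ∈ genS r) ∧ l.length = n ∧ l.prod = w}.Nonempty :=
    ⟨l.length, l, hl1, rfl, hl3⟩
  apply le_antisymm
  · calc len r w ≤ l.length := Nat.sInf_le ⟨l, hl1, rfl, hl3⟩
      _ ≤ NN w := hl2
  · obtain ⟨l0, h1, h2, h3⟩ := Nat.sInf_mem hne
    calc NN w = NN l0.prod := by rw [h3]
      _ ≤ l0.length := NN_prod_le l0 h1
      _ = len r w := h2



/-- The subgroup of elements `(χ, 1)` with `χ` supported on `{0, …, k-1}`. -/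
def Ksub (r k : ℕ) : Subgroup (WB r) where
  carrier := {w | w.right = 1 ∧ ∀ i : Fin r, w.left i ≠ 1 → (i : ℕ) < k}
  one_mem' := ⟨rfl, fun i hi => absurd rfl hi⟩
  mul_mem' := by
    rintro a b ⟨ha1, ha2⟩ ⟨hb1, hb2⟩
    refine ⟨by rw [SemidirectProduct.mul_right, ha1, hb1, one_mul], ?_⟩
    intro i hi
    rw [mul_left_apply] at hi
    by_cases h : a.left i = 1
    · rw [h, one_mul] at hi
      have := hb2 (a.right.symm i) hi
      rw [ha1] at this
      exact this
    · exact ha2 i h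
  inv_mem' := by
    rintro a ⟨ha1, ha2⟩
    refine ⟨by rw [SemidirectProduct.inv_right, ha1]; rfl, ?_⟩
    intro i hi
    rw [inv_left_apply] at hi
    have : a.left (a.right i) ≠ 1 := fun h => hi (by rw [h]; rfl)
    have := ha2 _ this
    rw [ha1] at this
    simpa using this

lemma mk_eq_tB_mul (χ : NB r) (j : Fin r) (hj : χ j ≠ 1) :
    (⟨χ, 1⟩ : WB r) = tB r (j : ℕ) * ⟨Function.update χ j 1, 1⟩ := by
  rw [show tB r (j : ℕ) = ⟨eVec r ⟨(j : ℕ), j.isLt⟩, 1⟩ from tB_eq _ j.isLt]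
  apply wb_ext
  · funext i
    rw [mul_left_apply]
    show χ i = eVec r ⟨(j : ℕ), j.isLt⟩ i * Function.update χ j 1 ((1 : Equiv.Perm (Fin r)).symm i)
    have hj' : (⟨(j : ℕ), j.isLt⟩ : Fin r) = j := Fin.ext rfl
    rw [show ((1 : Equiv.Perm (Fin r)).symm i) = i from rfl, hj']
    by_cases h : i = j
    · subst h
      rw [Function.update_self, eVec, if_pos rfl, mul_one]
      rcases zmod2_eq (χ i) with h1 | h1
      · exact absurd h1 hj
      · exact h1
    · rw [Function.update_of_ne h, eVec, if_neg h, one_mul]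
  · show (1 : Equiv.Perm (Fin r)) = 1 * 1
    rw [one_mul]

lemma mem_Comega_of_supp (k : ℕ) :
    ∀ (s : Finset (Fin r)) (χ : NB r), (∀ i, χ i ≠ 1 → i ∈ s) → (∀ i ∈ s, (i : ℕ) < k) →
      (⟨χ, 1⟩ : WB r) ∈ Comega r k := by
  intro s
  induction s using Finset.induction with
  | empty =>
    intro χ h _
    have : χ = 1 := funext fun i => not_not.mp (fun hi => by simpa using h i hi)
    rw [this]
    exact Subgroup.one_mem _
  | @insert j s hj ih =>
    intro χ hsupp hlt
    by_cases hχj : χ j = 1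
    · refine ih χ (fun i hi => ?_) (fun i hi => hlt i (Finset.mem_insert_of_mem hi))
      rcases Finset.mem_insert.1 (hsupp i hi) with h | h
      · exact absurd (h ▸ hχj) hi
      · exact h
    · rw [mk_eq_tB_mul χ j hχj]
      refine Subgroup.mul_mem _ (Subgroup.subset_closure ⟨(j : ℕ),
        hlt j (Finset.mem_insert_self j s), rfl⟩) ?_
      refine ih _ (fun i hi => ?_) (fun i hi => hlt i (Finset.mem_insert_of_mem hi))
      by_cases h : i = j
      · subst h; rw [Function.update_self] at hi; exact absurd rfl hi
      · rw [Function.update_of_ne h] at hi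
        rcases Finset.mem_insert.1 (hsupp i hi) with h' | h'
        · exact absurd h' h
        · exact h'

lemma mem_Comega_iff (k : ℕ) (w : WB r) :
    w ∈ Comega r k ↔ w.right = 1 ∧ ∀ i : Fin r, w.left i ≠ 1 → (i : ℕ) < k := by
  constructor
  · intro hw
    refine (Subgroup.closure_le (Ksub r k)).2 ?_ hw
    rintro x ⟨i, hik, rfl⟩
    by_cases h : i < r
    · rw [tB_eq i h]
      refine ⟨rfl, fun j hj => ?_⟩
      have : j = ⟨i, h⟩ := by
        by_contra hne
        exact hj (by show eVec r ⟨i, h⟩ j = 1; rw [eVec, if_neg hne])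
      rw [this]
      exact lt_of_eq_of_lt rfl hik
    · rw [tB, dif_neg h]
      exact ⟨rfl, fun i hi => absurd rfl hi⟩
  · rintro ⟨h1, h2⟩
    have hw : w = ⟨w.left, 1⟩ := wb_ext _ _ rfl h1
    rw [hw]
    exact mem_Comega_of_supp k (Finset.univ.filter (fun i => (i : ℕ) < k)) w.left
      (fun i hi => by simp [h2 i hi]) (fun i hi => by simpa using hi)



lemma NN_flip (k : ℕ) (e : WB r) (he : ∀ i : Fin r, (i : ℕ) < k → e.left i = 1) :
    ∀ (s : Finset (Fin r)) (χ : NB r), (∀ i, χ i ≠ 1 → i ∈ s) → (∀ i ∈ s, (i : ℕ) < k) →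
      NN e ≤ NN ((⟨χ, 1⟩ : WB r) * e) := by
  intro s
  induction s using Finset.induction with
  | empty =>
    intro χ h _
    have : χ = 1 := funext fun i => not_not.mp (fun hi => by simpa using h i hi)
    rw [this, show ((⟨(1 : NB r), 1⟩ : WB r)) = 1 from rfl, one_mul]
  | @insert j s hj ih =>
    intro χ hsupp hlt
    by_cases hχj : χ j = 1
    · refine ih χ (fun i hi => ?_) (fun i hi => hlt i (Finset.mem_insert_of_mem hi))
      rcases Finset.mem_insert.1 (hsupp i hi) with h | h
      · exact absurd (h ▸ hχj) hi
      · exact h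
    · rw [mk_eq_tB_mul χ j hχj, mul_assoc]
      set u : WB r := (⟨Function.update χ j 1, 1⟩ : WB r) * e with hu
      have hih : NN e ≤ NN u := by
        refine ih _ (fun i hi => ?_) (fun i hi => hlt i (Finset.mem_insert_of_mem hi))
        by_cases h : i = j
        · subst h; rw [Function.update_self] at hi; exact absurd rfl hi
        · rw [Function.update_of_ne h] at hi
          rcases Finset.mem_insert.1 (hsupp i hi) with h' | h'
          · exact absurd h' h
          · exact h'
      have huj : u.left ⟨(j : ℕ), j.isLt⟩ = 1 := by
        rw [hu, mul_left_apply]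
        have hj' : (⟨(j : ℕ), j.isLt⟩ : Fin r) = j := Fin.ext rfl
        rw [hj']
        show Function.update χ j 1 j * e.left j = 1
        rw [Function.update_self, one_mul]
        exact he j (hlt j (Finset.mem_insert_self j s))
      have := NN_tB_pos (j : ℕ) j.isLt u huj
      omega

lemma mem_Dright_iff (k : ℕ) (e : WB r) :
    e ∈ Dright r k ↔ ∀ i : Fin r, (i : ℕ) < k → e.left i = 1 := by
  constructor
  · intro he
    by_contra hno
    push_neg at hno
    obtain ⟨i, hik, hi⟩ := hno
    have ht : tB r (i : ℕ) ∈ Comega r k := Subgroup.subset_closure ⟨(i : ℕ), hik, rfl⟩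
    have hle := he _ ht
    rw [len_eq_NN, len_eq_NN] at hle
    have hdec := NN_tB_neg (i : ℕ) i.isLt e (by
      rw [show (⟨(i : ℕ), i.isLt⟩ : Fin r) = i from Fin.ext rfl]; exact hi)
    omega
  · intro he w hw
    rw [len_eq_NN, len_eq_NN]
    obtain ⟨h1, h2⟩ := (mem_Comega_iff k w).1 hw
    have hw' : w = ⟨w.left, 1⟩ := wb_ext _ _ rfl h1
    rw [hw']
    exact NN_flip k e he (Finset.univ.filter (fun i => (i : ℕ) < k)) w.left
      (fun i hi => by simp [h2 i hi]) (fun i hi => by simpa using hi)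

lemma conj_mk (e : WB r) (χ : NB r) :
    e⁻¹ * (⟨χ, 1⟩ : WB r) * e = ⟨fun j => χ (e.right j), 1⟩ := by
  have hr : (e⁻¹ * (⟨χ, 1⟩ : WB r)).right = e.right⁻¹ := by
    rw [SemidirectProduct.mul_right, SemidirectProduct.inv_right]
    show e.right⁻¹ * 1 = e.right⁻¹
    rw [mul_one]
  apply wb_ext
  · funext j
    rw [mul_left_apply, mul_left_apply, inv_left_apply, hr]
    show (e.left (e.right j))⁻¹ * χ ((e.right⁻¹).symm j) * e.left ((e.right⁻¹).symm j)
        = χ (e.right j)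
    have hss : (e.right⁻¹).symm j = e.right j := rfl
    rw [hss]
    rw [mul_comm ((e.left (e.right j))⁻¹) (χ (e.right j)), mul_assoc, inv_mul_cancel, mul_one]
  · rw [SemidirectProduct.mul_right, hr]
    show e.right⁻¹ * e.right = 1
    rw [inv_mul_cancel]

lemma tB_ne_one (i : Fin r) : tB r (i : ℕ) ≠ 1 := by
  intro h
  rw [tB_eq (i : ℕ) i.isLt] at h
  have h3 : eVec r ⟨(i : ℕ), i.isLt⟩ i = 1 := congrArg (fun w : WB r => w.left i) h
  rw [eVec, if_pos (show i = ⟨(i : ℕ), i.isLt⟩ from Fin.ext rfl)] at h3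
  exact ofAdd_one_ne_one h3

lemma mem_D0_iff (k b : ℕ) (e : WB r) :
    e ∈ D0 r k b ↔
      (∀ i : Fin r, (i : ℕ) < k → e.left i = 1) ∧
      (∀ j : Fin r, (j : ℕ) < b → e.left (e.right j) = 1) ∧
      (∀ i : Fin r, (i : ℕ) < k → ¬ ((e.right.symm i : ℕ) < b)) := by
  have hDab : e ∈ Dab r k b ↔
      (∀ i : Fin r, (i : ℕ) < k → e.left i = 1) ∧
      (∀ j : Fin r, (j : ℕ) < b → e.left (e.right j) = 1) := by
    rw [show e ∈ Dab r k b ↔ e ∈ Dright r k ∧ e⁻¹ ∈ Dright r b from Iff.rfl,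
      mem_Dright_iff, mem_Dright_iff]
    constructor
    · rintro ⟨h1, h2⟩
      refine ⟨h1, fun j hj => ?_⟩
      have := h2 j hj
      rw [inv_left_apply] at this
      exact inv_eq_one.1 this
    · rintro ⟨h1, h2⟩
      refine ⟨h1, fun j hj => ?_⟩
      rw [inv_left_apply, inv_eq_one]
      exact h2 j hj
  constructor
  · rintro ⟨h1, h2⟩
    obtain ⟨hP1, hP2⟩ := hDab.1 h1
    refine ⟨hP1, hP2, fun i hik hib => ?_⟩
    have hx : tB r (i : ℕ) ∈ Comega r k := Subgroup.subset_closure ⟨(i : ℕ), hik, rfl⟩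
    have hconj : e⁻¹ * tB r (i : ℕ) * e ∈ Comega r b := by
      rw [tB_eq (i : ℕ) i.isLt,
        show (⟨(i : ℕ), i.isLt⟩ : Fin r) = i from Fin.ext rfl, conj_mk]
      rw [mem_Comega_iff]
      refine ⟨rfl, fun j hj => ?_⟩
      have hrj : e.right j = i := by
        by_contra hne
        exact hj (by show eVec r i (e.right j) = 1; rw [eVec, if_neg hne])
      have : j = e.right.symm i := by rw [← hrj, Equiv.symm_apply_apply]
      rw [this]
      exact hib
    exact tB_ne_one i (h2 _ hx hconj)
  · rintro ⟨hP1, hP2, hP3⟩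
    refine ⟨hDab.2 ⟨hP1, hP2⟩, fun x hx hconj => ?_⟩
    obtain ⟨hx1, hx2⟩ := (mem_Comega_iff k x).1 hx
    have hx' : x = ⟨x.left, 1⟩ := wb_ext _ _ rfl hx1
    rw [hx', conj_mk, mem_Comega_iff] at hconj
    obtain ⟨-, hsupp⟩ := hconj
    rw [hx']
    refine wb_ext _ _ ?_ rfl
    funext i
    show x.left i = 1
    by_contra hne
    have hik := hx2 i hne
    have : x.left (e.right (e.right.symm i)) ≠ 1 := by
      rw [Equiv.apply_symm_apply]; exact hne
    have := hsupp (e.right.symm i) this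
    exact hP3 i hik this


lemma sB_push (a b : ℕ) (ha1 : 1 ≤ a) (har : a < r) (e : WB r)
    (hP1 : ∀ i : Fin r, (i : ℕ) < a - 1 → e.left i = 1)
    (hP2 : ∀ j : Fin r, (j : ℕ) < b → e.left (e.right j) = 1)
    (hP3 : ∀ i : Fin r, (i : ℕ) < a - 1 → ¬ ((e.right.symm i : ℕ) < b)) :
    (∀ i : Fin r, (i : ℕ) < a - 1 → (sB r a * e).left i = 1) ∧
    (∀ j : Fin r, (j : ℕ) < b → (sB r a * e).left ((sB r a * e).right j) = 1) ∧
    (∀ i : Fin r, (i : ℕ) < a - 1 → ¬ (((sB r a * e).right.symm i : ℕ) < b)) := by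
  have ha1r : a - 1 < r := by omega
  set τ := Equiv.swap (⟨a - 1, ha1r⟩ : Fin r) ⟨a, har⟩ with hτ
  have hfix : ∀ i : Fin r, (i : ℕ) < a - 1 → τ i = i := by
    intro i hi
    apply Equiv.swap_apply_of_ne_of_ne
    · intro h; rw [h] at hi; exact absurd hi (by omega : ¬(a - 1 < a - 1))
    · intro h; rw [h] at hi; exact absurd hi (by omega : ¬(a < a - 1))
  have hL : ∀ x, (sB r a * e).left x = e.left (τ x) := fun x => sB_mul_left a ha1 har e x
  have hR : (sB r a * e).right = e.right.trans τ :=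
    Equiv.ext fun j => sB_mul_right a ha1 har e j
  refine ⟨?_, ?_, ?_⟩
  · intro i hi
    rw [hL, hfix i hi]
    exact hP1 i hi
  · intro j hj
    rw [hL, hR]
    show e.left (τ (τ (e.right j))) = 1
    rw [Equiv.swap_apply_self]
    exact hP2 j hj
  · intro i hi
    rw [hR]
    have : (e.right.trans τ).symm i = e.right.symm (τ.symm i) := rfl
    rw [this, Equiv.symm_swap, hfix i hi]
    exact hP3 i hi
end Stmt5Proof

open Stmt5Proof in
/-- For `1 ≤ a ≤ r−1`, `0 ≤ b ≤ r` and `d ∈ D⁰_{ω_a,ω_b}`, the four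
elements `d`, `t_a·d`, `s_a·d` and `s_a·t_a·d` all lie in `D⁰_{ω_{a−1},ω_b}`.
(In 0-indexed notation `t_a = tB r (a-1)` and `s_a = sB r a`.) -/
theorem stmt5 (r a b : ℕ) (hr : 2 ≤ r) (ha1 : 1 ≤ a) (ha : a ≤ r - 1) (hb : b ≤ r)
    (d : WB r) (hd : d ∈ D0 r a b) :
    d ∈ D0 r (a - 1) b ∧ tB r (a - 1) * d ∈ D0 r (a - 1) b ∧
    sB r a * d ∈ D0 r (a - 1) b ∧ sB r a * (tB r (a - 1) * d) ∈ D0 r (a - 1) b := by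
  have har : a < r := by omega
  have ha1r : a - 1 < r := by omega
  obtain ⟨H1, H2, H3⟩ := (mem_D0_iff a b d).1 hd
  have P1d : ∀ i : Fin r, (i : ℕ) < a - 1 → d.left i = 1 := fun i hi => H1 i (by omega)
  have P3d : ∀ i : Fin r, (i : ℕ) < a - 1 → ¬ ((d.right.symm i : ℕ) < b) :=
    fun i hi => H3 i (by omega)
  set e2 := tB r (a - 1) * d with he2
  have hL2 : ∀ x, e2.left x = eVec r ⟨a - 1, ha1r⟩ x * d.left x :=
    fun x => tB_mul_left (a - 1) ha1r d x
  have hR2 : e2.right = d.right := Equiv.ext fun j => tB_mul_right (a - 1) ha1r d j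
  have P1e2 : ∀ i : Fin r, (i : ℕ) < a - 1 → e2.left i = 1 := by
    intro i hi
    rw [hL2, P1d i hi, mul_one, eVec,
      if_neg (fun h => by rw [h] at hi; exact absurd hi (by omega : ¬(a - 1 < a - 1)))]
  have P2e2 : ∀ j : Fin r, (j : ℕ) < b → e2.left (e2.right j) = 1 := by
    intro j hj
    rw [hR2, hL2, H2 j hj, mul_one, eVec]
    rw [if_neg ?hne]
    case hne =>
      intro h
      have hji : j = d.right.symm ⟨a - 1, ha1r⟩ := by rw [← h, Equiv.symm_apply_apply]
      have := H3 ⟨a - 1, ha1r⟩ (show ((⟨a - 1, ha1r⟩ : Fin r) : ℕ) < a by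
        show a - 1 < a; omega)
      rw [← hji] at this
      exact this hj
  have P3e2 : ∀ i : Fin r, (i : ℕ) < a - 1 → ¬ ((e2.right.symm i : ℕ) < b) := by
    intro i hi
    rw [hR2]
    exact P3d i hi
  refine ⟨?_, ?_, ?_, ?_⟩
  · exact (mem_D0_iff (a - 1) b d).2 ⟨P1d, H2, P3d⟩
  · exact (mem_D0_iff (a - 1) b e2).2 ⟨P1e2, P2e2, P3e2⟩
  · obtain ⟨Q1, Q2, Q3⟩ := sB_push a b ha1 har d P1d H2 P3d
    exact (mem_D0_iff (a - 1) b _).2 ⟨Q1, Q2, Q3⟩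
  · obtain ⟨Q1, Q2, Q3⟩ := sB_push a b ha1 har e2 P1e2 P2e2 P3e2
    exact (mem_D0_iff (a - 1) b _).2 ⟨Q1, Q2, Q3⟩
end
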